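/- arXiv:2212.13091 — 9 statements merged into one kernel-verified Lean document; each statement's English description precedes it below -/
import Mathlib

section
/- Let S be a standard ℕ^p-graded polynomial ring over a field and J ⊂ S a square-free monomial ideal with minimal primary decomposition J = 𝔭_1 ∩ ... ∩ 𝔭_k (each 𝔭_i generated by variables). Then the multigraded Hilbert polynomial of S/J equals the inclusion-exclusion sum Σ_{∅ ≠ 𝔍 ⊆ [k]} (-1)^(|𝔍|-1) P_{S/𝔭_𝔍}(t), where 𝔭_𝔍 = Σ_{i ∈ 𝔍} 𝔭_i. -/
open MvPolynomial

/-- The multidegree of a monomial exponent `d` in the standard `ℕ^p`-graded polynomial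
ring whose variables `x_{i,j}` (`0 ≤ j ≤ m_i`) have degree `e_i ∈ ℕ^p`. -/
noncomputable def mdeg {p : ℕ} {m : Fin p → ℕ}
    (d : (Σ i : Fin p, Fin (m i + 1)) →₀ ℕ) : Fin p → ℕ :=
  fun i => ∑ x ∈ d.support, if x.1 = i then d x else 0

/-- The multigraded Hilbert function of `S/I`: the `K`-dimension of the degree-`v`
component of `S/I`, i.e. of the image in `S/I` of the span of the monomials of
multidegree `v`. -/
noncomputable def hilbFn {p : ℕ} {m : Fin p → ℕ} (K : Type*) [Field K]
    (I : Ideal (MvPolynomial (Σ i : Fin p, Fin (m i + 1)) K)) (v : Fin p → ℕ) : ℕ :=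
  Module.finrank K
    (Submodule.map (Ideal.Quotient.mkₐ K I).toLinearMap
      (Submodule.span K
        {f | ∃ d : (Σ i : Fin p, Fin (m i + 1)) →₀ ℕ, mdeg d = v ∧ f = monomial d 1}))

/-- The monomial prime ideal generated by a set `V` of variables. -/
noncomputable def monomialPrime {p : ℕ} {m : Fin p → ℕ} (K : Type*) [Field K]
    (V : Finset (Σ i : Fin p, Fin (m i + 1))) :
    Ideal (MvPolynomial (Σ i : Fin p, Fin (m i + 1)) K) :=
  Ideal.span (MvPolynomial.X '' (V : Set (Σ i : Fin p, Fin (m i + 1))))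

open scoped Classical

set_option maxHeartbeats 1000000
open Finset

lemma eval_eventually_zero : ∀ {n : ℕ} (P : MvPolynomial (Fin n) ℚ) (N : ℕ),
    (∀ v : Fin n → ℕ, (∀ i, N ≤ v i) → eval (fun i => (v i : ℚ)) P = 0) → P = 0 := by
  intro n
  induction n with
  | zero =>
    intro P N h
    obtain ⟨a, rfl⟩ := C_surjective (Fin 0) P
    have := h (fun _ => N) (fun i => le_rfl)
    simpa using this
  | succ n ih =>
    intro P N h
    have hΦ : finSuccEquiv ℚ n P = 0 := by
      refine Polynomial.ext fun k => ?_
      rw [Polynomial.coeff_zero]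
      apply ih _ N
      intro w hw
      have hg : (Polynomial.map (eval fun i => (w i : ℚ)) (finSuccEquiv ℚ n P)) = 0 := by
        apply Polynomial.eq_zero_of_infinite_isRoot
        apply Set.infinite_of_injective_forall_mem
          (f := fun t : ℕ => ((t + N : ℕ) : ℚ))
        · intro a b hab
          have : a + N = b + N := Nat.cast_injective hab
          omega
        · intro t
          simp only [Set.mem_setOf_eq, Polynomial.IsRoot]
          rw [← eval_eq_eval_mv_eval']
          have hcast : (Fin.cons ((t + N : ℕ) : ℚ) (fun i => (w i : ℚ)) : Fin (n+1) → ℚ)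
              = fun i => ((Fin.cons (t + N) w : Fin (n+1) → ℕ) i : ℚ) := by
            funext i
            refine Fin.cases ?_ ?_ i <;> simp
          rw [hcast]
          apply h
          intro i
          refine Fin.cases ?_ ?_ i
          · simpa using Nat.le_add_left N t
          · intro j; simpa using hw j
      have := congrArg (fun g => Polynomial.coeff g k) hg
      simpa [Polynomial.coeff_map] using this
    apply (finSuccEquiv ℚ n).injective
    rw [hΦ, map_zero]


noncomputable def Dv {p : ℕ} (m : Fin p → ℕ) (v : Fin p → ℕ) :
    Finset ((Σ i : Fin p, Fin (m i + 1)) →₀ ℕ) :=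
  (Finset.finsuppAntidiag Finset.univ (∑ i, v i)).filter (fun d => mdeg d = v)

lemma mem_Dv {p : ℕ} {m : Fin p → ℕ} {v : Fin p → ℕ}
    {d : (Σ i : Fin p, Fin (m i + 1)) →₀ ℕ} : d ∈ Dv m v ↔ mdeg d = v := by
  simp only [Dv, mem_filter, Finset.mem_finsuppAntidiag]
  constructor
  · rintro ⟨-, h⟩; exact h
  intro hd
  refine ⟨⟨?_, d.support.subset_univ⟩, hd⟩
  have : ∑ i, mdeg d i = ∑ i, v i := by rw [hd]
  rw [← this]
  unfold mdeg
  rw [Finset.sum_comm]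
  have h2 : ∀ y ∈ d.support, (∑ x : Fin p, if y.fst = x then d y else 0) = d y :=
    fun y _ => by simp [Finset.sum_ite_eq]
  rw [Finset.sum_congr rfl h2]
  exact (Finset.sum_subset (Finset.subset_univ _)
    (fun x _ hx => by simpa using hx)).symm

lemma hilbFn_eq_card {p : ℕ} {m : Fin p → ℕ} (K : Type*) [Field K]
    (I : Ideal (MvPolynomial (Σ i : Fin p, Fin (m i + 1)) K))
    (B : ((Σ i : Fin p, Fin (m i + 1)) →₀ ℕ) → Prop) [DecidablePred B]
    (hI : ∀ f : MvPolynomial (Σ i : Fin p, Fin (m i + 1)) K,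
      f ∈ I ↔ ∀ d ∈ f.support, B d) (v : Fin p → ℕ) :
    hilbFn K I v = ((Dv m v).filter (fun d => ¬ B d)).card := by
  let σ := (Σ i : Fin p, Fin (m i + 1))
  set G : Finset (σ →₀ ℕ) := (Dv m v).filter (fun d => ¬ B d) with hG
  set φ := (Ideal.Quotient.mkₐ K I).toLinearMap
  set b : G → MvPolynomial σ K := fun d => monomial (d : σ →₀ ℕ) 1 with hb
  -- the monomial family is linearly independent
  have hbli : LinearIndependent K b := by
    have := (MvPolynomial.basisMonomials σ K).linearIndependent
    rw [MvPolynomial.coe_basisMonomials] at this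
    exact this.comp _ Subtype.val_injective
  -- support of elements of the span
  have hsupp : ∀ f ∈ Submodule.span K (Set.range b), ∀ d ∈ f.support, d ∈ G := by
    intro f hf
    refine Submodule.span_induction ?_ ?_ ?_ ?_ hf
    · rintro x ⟨d, rfl⟩
      intro e he
      rw [hb] at he
      simp only [MvPolynomial.support_monomial, if_neg (one_ne_zero : (1:K) ≠ 0),
        Finset.mem_singleton] at he
      subst he; exact d.2
    · simp
    · intro x y _ _ hx hy e he
      rcases Finset.mem_union.1 (MvPolynomial.support_add he) with h | h
      · exact hx _ h
      · exact hy _ h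
    · intro c x _ hx e he
      exact hx _ (MvPolynomial.support_smul he)
  -- linear independence survives the quotient
  have hli : LinearIndependent K (φ ∘ b) := by
    refine hbli.map ?_
    rw [Submodule.disjoint_def]
    intro f hf hker
    have hfI : f ∈ I := by
      rwa [LinearMap.mem_ker, show φ f = Ideal.Quotient.mk I f from rfl,
        Ideal.Quotient.eq_zero_iff_mem] at hker
    by_contra hne
    obtain ⟨d, hd⟩ := (MvPolynomial.support_nonempty.2 hne)
    have h1 : B d := (hI f).1 hfI d hd
    have h2 : d ∈ G := hsupp f hf d hd
    rw [hG, mem_filter] at h2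
    exact h2.2 h1
  -- the image submodule is the span of the quotiented monomial family
  have hspan : Submodule.map φ (Submodule.span K
      {f : MvPolynomial σ K | ∃ d : σ →₀ ℕ, mdeg d = v ∧ f = monomial d 1}) =
      Submodule.span K (Set.range (φ ∘ b)) := by
    rw [Submodule.map_span]
    apply le_antisymm
    · rw [Submodule.span_le]
      rintro - ⟨f, ⟨d, hdv, rfl⟩, rfl⟩
      by_cases hBd : B d
      · have : monomial d (1:K) ∈ I := by
          rw [hI]
          intro e he
          simp only [MvPolynomial.support_monomial, if_neg (one_ne_zero : (1:K) ≠ 0),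
            Finset.mem_singleton] at he
          subst he; exact hBd
        have : φ (monomial d (1:K)) = 0 := by
          rwa [show φ (monomial d (1:K)) = Ideal.Quotient.mk I (monomial d 1) from rfl,
            Ideal.Quotient.eq_zero_iff_mem]
        rw [this]
        exact Submodule.zero_mem _
      · have hdG : d ∈ G := by rw [hG, mem_filter, mem_Dv]; exact ⟨hdv, hBd⟩
        exact Submodule.subset_span ⟨⟨d, hdG⟩, rfl⟩
    · rw [Submodule.span_le]
      rintro - ⟨⟨d, hdG⟩, rfl⟩
      have hdv : mdeg d = v := by
        rw [hG, mem_filter, mem_Dv] at hdG; exact hdG.1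
      exact Submodule.subset_span ⟨monomial d 1, ⟨d, hdv, rfl⟩, rfl⟩
  rw [hilbFn, hspan, finrank_span_eq_card hli, Fintype.card_coe]


lemma mem_iInf_monomialPrime {p q : ℕ} {m : Fin p → ℕ} (K : Type*) [Field K]
    (V : Fin q → Finset (Σ i : Fin p, Fin (m i + 1)))
    (f : MvPolynomial (Σ i : Fin p, Fin (m i + 1)) K) :
    f ∈ ⨅ i, monomialPrime K (V i) ↔
      ∀ d ∈ f.support, ∀ i, ∃ x ∈ V i, d x ≠ 0 := by
  simp only [Submodule.mem_iInf, monomialPrime, mem_ideal_span_X_image, Finset.mem_coe]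
  tauto

lemma mem_biSup_monomialPrime {p q : ℕ} {m : Fin p → ℕ} (K : Type*) [Field K]
    (V : Fin q → Finset (Σ i : Fin p, Fin (m i + 1))) (𝔍 : Finset (Fin q))
    (f : MvPolynomial (Σ i : Fin p, Fin (m i + 1)) K) :
    f ∈ (⨆ i ∈ 𝔍, monomialPrime K (V i)) ↔
      ∀ d ∈ f.support, ∃ i ∈ 𝔍, ∃ x ∈ V i, d x ≠ 0 := by
  have h1 : (⨆ i ∈ 𝔍, monomialPrime K (V i) :
      Ideal (MvPolynomial (Σ i : Fin p, Fin (m i + 1)) K)) =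
      Ideal.span (MvPolynomial.X '' (⋃ i ∈ 𝔍, (V i : Set (Σ i : Fin p, Fin (m i + 1))))) := by
    rw [Set.image_iUnion₂]
    exact (Submodule.span_iUnion₂ _).symm
  rw [h1, mem_ideal_span_X_image]
  constructor
  · intro h d hd
    obtain ⟨x, hx, hne⟩ := h d hd
    simp only [Set.mem_iUnion, Finset.mem_coe] at hx
    obtain ⟨i, hi, hxi⟩ := hx
    exact ⟨i, hi, x, hxi, hne⟩
  · intro h d hd
    obtain ⟨i, hi, x, hxi, hne⟩ := h d hd
    exact ⟨x, by simp only [Set.mem_iUnion, Finset.mem_coe]; exact ⟨i, hi, hxi⟩, hne⟩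

lemma counting {p q : ℕ} {m : Fin p → ℕ} (K : Type*) [Field K]
    (V : Fin q → Finset (Σ i : Fin p, Fin (m i + 1))) (v : Fin p → ℕ) :
    (hilbFn K (⨅ i, monomialPrime K (V i)) v : ℚ) =
    ∑ 𝔍 ∈ (Finset.univ : Finset (Fin q)).powerset.erase ∅,
      (-1:ℚ)^(𝔍.card+1) * (hilbFn K (⨆ i ∈ 𝔍, monomialPrime K (V i)) v) := by
  set A : Fin q → Finset ((Σ i : Fin p, Fin (m i + 1)) →₀ ℕ) :=
    fun i => (Dv m v).filter (fun d => ∀ x ∈ V i, d x = 0) with hA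
  -- the Hilbert function of the intersection counts the union
  have hJ : hilbFn K (⨅ i, monomialPrime K (V i)) v = (Finset.univ.biUnion A).card := by
    rw [hilbFn_eq_card K _ (fun d => ∀ i, ∃ x ∈ V i, d x ≠ 0)
      (mem_iInf_monomialPrime K V) v]
    congr 1
    ext d
    rw [mem_filter, mem_biUnion]
    constructor
    · rintro ⟨hdD, hdB⟩
      push_neg at hdB
      obtain ⟨i, hi⟩ := hdB
      exact ⟨i, mem_univ i, mem_filter.2 ⟨hdD, hi⟩⟩
    · rintro ⟨i, -, hdA⟩
      rw [mem_filter] at hdA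
      refine ⟨hdA.1, ?_⟩
      push_neg
      exact ⟨i, hdA.2⟩
  -- the Hilbert function of the sup counts the intersection
  have hS : ∀ (𝔍 : Finset (Fin q)) (h𝔍 : 𝔍.Nonempty),
      hilbFn K (⨆ i ∈ 𝔍, monomialPrime K (V i)) v = (𝔍.inf' h𝔍 A).card := by
    intro 𝔍 h𝔍
    rw [hilbFn_eq_card K _ (fun d => ∃ i ∈ 𝔍, ∃ x ∈ V i, d x ≠ 0)
      (mem_biSup_monomialPrime K V 𝔍) v]
    have heq : 𝔍.inf' h𝔍 A =
        (Dv m v).filter (fun d => ¬ ∃ i ∈ 𝔍, ∃ x ∈ V i, d x ≠ 0) := by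
      apply Finset.Subset.antisymm
      · intro d hd
        have hdA : ∀ i ∈ 𝔍, d ∈ A i :=
          fun i hi => Finset.le_iff_subset.1 (Finset.inf'_le A hi) hd
        obtain ⟨i0, hi0⟩ := h𝔍
        rw [mem_filter]
        refine ⟨(mem_filter.1 (hdA i0 hi0)).1, ?_⟩
        push_neg
        intro i hi x hx
        exact (mem_filter.1 (hdA i hi)).2 x hx
      · rw [← Finset.le_iff_subset]
        apply Finset.le_inf'
        intro i hi
        rw [Finset.le_iff_subset]
        intro d hd
        rw [mem_filter] at hd
        rw [hA, mem_filter]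
        push_neg at hd
        exact ⟨hd.1, hd.2 i hi⟩
    rw [heq]
  -- inclusion-exclusion
  have hZ := Finset.inclusion_exclusion_card_biUnion (Finset.univ : Finset (Fin q)) A
  have hQ : ((Finset.univ.biUnion A).card : ℚ) =
      ∑ t : ((Finset.univ : Finset (Fin q)).powerset.filter (·.Nonempty)),
        (-1:ℚ)^(t.1.card+1) * ((t.1.inf' (mem_filter.1 t.2).2 A).card) := by
    exact_mod_cast congrArg (fun z : ℤ => (z : ℚ)) hZ
  rw [hJ, hQ]
  have hterm : ∀ t : ((Finset.univ : Finset (Fin q)).powerset.filter (·.Nonempty)),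
      (-1:ℚ)^(t.1.card+1) * ((t.1.inf' (mem_filter.1 t.2).2 A).card) =
      (-1:ℚ)^(t.1.card+1) * (hilbFn K (⨆ i ∈ t.1, monomialPrime K (V i)) v) := by
    intro t
    rw [hS t.1 (mem_filter.1 t.2).2]
  rw [Finset.sum_congr rfl (fun t _ => hterm t)]
  have hsum := Finset.sum_coe_sort
    ((Finset.univ : Finset (Fin q)).powerset.filter (·.Nonempty))
    (fun 𝔍 => (-1:ℚ)^(𝔍.card+1) * (hilbFn K (⨆ i ∈ 𝔍, monomialPrime K (V i)) v : ℚ))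
  have hset : ((Finset.univ : Finset (Fin q)).powerset.filter (·.Nonempty)) =
      (Finset.univ : Finset (Fin q)).powerset.erase ∅ := by
    rw [← Finset.filter_ne']
    apply Finset.filter_congr
    intro 𝔍 _
    simp [Finset.nonempty_iff_ne_empty]
  rw [← hset]
  exact hsum

/-- **Inclusion–exclusion for Hilbert polynomials of square-free monomial ideals.**
Let `J = 𝔭_1 ∩ ⋯ ∩ 𝔭_q` be the minimal primary decomposition of a square-free monomial
ideal in a standard `ℕ^p`-graded polynomial ring (the `𝔭_i` generated by pairwise
incomparable sets of variables `V i`). If `PJ` is the multigraded Hilbert polynomial of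
`S/J` and `Psum 𝔍` that of `S/𝔭_𝔍` with `𝔭_𝔍 = Σ_{i ∈ 𝔍} 𝔭_i`, then
`PJ = Σ_{∅ ≠ 𝔍 ⊆ [q]} (-1)^(|𝔍|-1) Psum 𝔍`. -/
theorem hilbertPoly_inclusion_exclusion {p q : ℕ} {m : Fin p → ℕ} (K : Type*) [Field K]
    (V : Fin q → Finset (Σ i : Fin p, Fin (m i + 1)))
    (hmin : ∀ i j : Fin q, i ≠ j → ¬ V i ⊆ V j)
    (PJ : MvPolynomial (Fin p) ℚ)
    (hPJ : ∃ N : ℕ, ∀ v : Fin p → ℕ, (∀ i, N ≤ v i) →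
      MvPolynomial.eval (fun i => (v i : ℚ)) PJ = hilbFn K (⨅ i, monomialPrime K (V i)) v)
    (Psum : Finset (Fin q) → MvPolynomial (Fin p) ℚ)
    (hPsum : ∀ 𝔍 : Finset (Fin q), 𝔍.Nonempty → ∃ N : ℕ, ∀ v : Fin p → ℕ,
      (∀ i, N ≤ v i) →
      MvPolynomial.eval (fun i => (v i : ℚ)) (Psum 𝔍) =
        hilbFn K (⨆ i ∈ 𝔍, monomialPrime K (V i)) v) :
    PJ = ∑ 𝔍 ∈ (Finset.univ : Finset (Fin q)).powerset.erase ∅,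
      MvPolynomial.C ((-1 : ℚ) ^ (𝔍.card + 1)) * Psum 𝔍 := by

  classical
  obtain ⟨N₀, hN₀⟩ := hPJ
  choose N' hN' using hPsum
  set Nb : ℕ := N₀ ⊔ ((Finset.univ : Finset (Fin q)).powerset.erase ∅).sup
    (fun 𝔍 => if h : 𝔍.Nonempty then N' 𝔍 h else 0) with hNb
  have key : PJ - ∑ 𝔍 ∈ (Finset.univ : Finset (Fin q)).powerset.erase ∅,
      MvPolynomial.C ((-1 : ℚ) ^ (𝔍.card + 1)) * Psum 𝔍 = 0 := by
    apply eval_eventually_zero _ Nb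
    intro v hv
    rw [map_sub, map_sum]
    have h1 : MvPolynomial.eval (fun i => (v i : ℚ)) PJ
        = (hilbFn K (⨅ i, monomialPrime K (V i)) v : ℚ) := by
      apply hN₀ v
      intro i
      exact le_trans (le_trans le_sup_left hNb.ge) (hv i)
    have h2 : ∀ 𝔍 ∈ (Finset.univ : Finset (Fin q)).powerset.erase ∅,
        MvPolynomial.eval (fun i => (v i : ℚ))
          (MvPolynomial.C ((-1 : ℚ) ^ (𝔍.card + 1)) * Psum 𝔍)
        = (-1:ℚ)^(𝔍.card+1) * (hilbFn K (⨆ i ∈ 𝔍, monomialPrime K (V i)) v : ℚ) := by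
      intro 𝔍 h𝔍
      have hne : 𝔍.Nonempty :=
        Finset.nonempty_iff_ne_empty.2 (Finset.ne_of_mem_erase h𝔍)
      rw [MvPolynomial.eval_mul, MvPolynomial.eval_C]
      congr 1
      apply hN' 𝔍 hne v
      intro i
      refine le_trans (le_trans ?_ le_sup_right) (le_trans hNb.ge (hv i))
      have hle := Finset.le_sup (f := fun 𝔍 => if h : 𝔍.Nonempty then N' 𝔍 h else 0) h𝔍
      simpa [dif_pos hne] using hle
    rw [h1, Finset.sum_congr rfl h2, ← counting K V v, sub_self]
  exact sub_eq_zero.1 key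
end

section
/- Let P ⊂ ℕ^p be a base polymatroid and let u, v ∈ P with u_i > v_i for some index i. Then there exists an index j with u_j < v_j such that both u - e_i + e_j ∈ P and v - e_j + e_i ∈ P (symmetric exchange property). -/
open Finset

/-- The `i`-th standard basis vector of `ℕ^p`. -/
def ev {p : ℕ} (i : Fin p) : Fin p → ℕ := fun k => if k = i then 1 else 0

/-- The coordinate sum `|u|` of a lattice point. -/
def degSum {p : ℕ} (u : Fin p → ℕ) : ℕ := ∑ i, u i

/-- `step u i j = u - e_i + e_j` (truncated subtraction; used when `u i > 0`). -/
def step {p : ℕ} (u : Fin p → ℕ) (i j : Fin p) : Fin p → ℕ :=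
  fun k => u k + ev j k - ev i k

/-- A (base) polymatroid: a finite homogeneous subset of `ℕ^p` satisfying the
exchange property. -/
def IsBasePolymatroid {p : ℕ} (P : Finset (Fin p → ℕ)) : Prop :=
  (∀ u ∈ P, ∀ v ∈ P, degSum u = degSum v) ∧
  (∀ u ∈ P, ∀ v ∈ P, ∀ i : Fin p, v i < u i →
    ∃ j : Fin p, u j < v j ∧ step u i j ∈ P)

/-- `max(A) = max {|a| : a ∈ A}`. -/
def maxDeg {p : ℕ} (A : Finset (Fin p → ℕ)) : ℕ := A.sup degSum

/-- The homogenization `A^hom ⊆ ℕ^(p+1)` of a finite set `A ⊆ ℕ^p`. -/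
def homog {p : ℕ} (A : Finset (Fin p → ℕ)) : Finset (Fin (p + 1) → ℕ) :=
  A.image (fun a => Fin.snoc a (maxDeg A - degSum a))

/-- A generalized polymatroid: a finite set whose homogenization is a base polymatroid. -/
def IsGPolymatroid {p : ℕ} (G : Finset (Fin p → ℕ)) : Prop :=
  IsBasePolymatroid (homog G)

lemma key_identity {p : ℕ} (v : Fin p → ℕ) (i j j' k l : Fin p)
    (hij : i ≠ j) (hij' : i ≠ j') (hki : k ≠ i) (hkj : k ≠ j) (hkj' : k ≠ j')
    (hvj : 1 ≤ v j) (hvj' : 1 ≤ v j') (hvjj : j' = j → 2 ≤ v j)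
    (hl : l = j ∨ l = j') :
    step (step (step v j k) j' i) k l =
      step v (if l = j then j' else j) i := by
  funext x
  rcases hl with rfl | rfl
  · simp only [if_pos rfl, step, ev]
    by_cases hx1 : x = i <;> by_cases hx2 : x = l <;> by_cases hx3 : x = j' <;>
      by_cases hx4 : x = k <;> simp_all <;> omega
  · by_cases hjj : l = j
    · subst hjj
      simp only [if_pos rfl, step, ev]
      by_cases hx1 : x = i <;> by_cases hx2 : x = l <;>
        by_cases hx4 : x = k <;> simp_all <;> omega
    · simp only [if_neg hjj, step, ev]
      by_cases hx1 : x = i <;> by_cases hx2 : x = l <;> by_cases hx3 : x = j <;>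
        by_cases hx4 : x = k <;> simp_all <;> omega

lemma symm_exchange_aux {p : ℕ} (P : Finset (Fin p → ℕ))
    (hex : ∀ u ∈ P, ∀ v ∈ P, ∀ i : Fin p, v i < u i →
      ∃ j : Fin p, u j < v j ∧ step u i j ∈ P) :
    ∀ n : ℕ, ∀ u v : Fin p → ℕ, (∑ k, (u k - v k)) ≤ n → u ∈ P → v ∈ P →
    ∀ i : Fin p, v i < u i →
    ∃ j : Fin p, u j < v j ∧ step u i j ∈ P ∧ step v j i ∈ P := by
  intro n
  induction n with
  | zero =>
    intro u v hd hu hv i hi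
    exfalso
    have h1 : u i - v i ≤ ∑ k, (u k - v k) :=
      Finset.single_le_sum (f := fun k => u k - v k)
        (fun k _ => Nat.zero_le _) (Finset.mem_univ i)
    omega
  | succ n ih =>
    intro u v hd hu hv i hi
    obtain ⟨j, hj, hu'⟩ := hex u hu v hv i hi
    obtain ⟨k, hk, hv'⟩ := hex v hv u hu j hj
    by_cases hki : k = i
    · subst hki; exact ⟨j, hj, hu', hv'⟩
    -- distinctness facts
    have hij : i ≠ j := by intro h; subst h; omega
    have hkj : k ≠ j := by intro h; subst h; omega
    set v' : Fin p → ℕ := step v j k with hv'def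
    have hv'eval : ∀ x, v' x = v x + (if x = k then 1 else 0) - (if x = j then 1 else 0) :=
      fun x => rfl
    have hv'i : v' i = v i := by
      rw [hv'eval, if_neg (Ne.symm hki), if_neg hij]
      omega
    have hv'k : v' k = v k + 1 := by
      rw [hv'eval, if_pos rfl, if_neg hkj]
      omega
    -- sum decreases
    have hd' : (∑ x, (u x - v' x)) ≤ n := by
      have hlt : (∑ x, (u x - v' x)) < ∑ x, (u x - v x) := by
        apply Finset.sum_lt_sum
        · intro x _
          rw [hv'eval]
          by_cases hxj : x = j
          · subst hxj
            rw [if_neg hkj.symm, if_pos rfl]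
            omega
          · rw [if_neg hxj]
            by_cases hxk : x = k
            · subst hxk; rw [if_pos rfl]; omega
            · rw [if_neg hxk]; omega
        · exact ⟨k, Finset.mem_univ k, by rw [hv'k]; omega⟩
      omega
    obtain ⟨j', hj', hu2, hw⟩ := ih u v' hd' hu hv' i (by rw [hv'i]; exact hi)
    have hkj' : k ≠ j' := by
      intro h; subst h; rw [hv'k] at hj'; omega
    have hij' : i ≠ j' := by
      intro h; subst h; rw [hv'i] at hj'; omega
    have hj'v : u j' < v j' := by
      have h0 := hv'eval j'
      rw [if_neg (Ne.symm hkj')] at h0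
      by_cases hjj : j' = j
      · subst hjj; rw [if_pos rfl] at h0; omega
      · rw [if_neg hjj] at h0; omega
    set w : Fin p → ℕ := step v' j' i with hwdef
    have hweval : ∀ x, w x = v' x + (if x = i then 1 else 0) - (if x = j' then 1 else 0) :=
      fun x => rfl
    have hwk : v k < w k := by
      rw [hweval, if_neg hki, if_neg hkj', hv'k]; omega
    obtain ⟨l, hl, hwl⟩ := hex w hw v hv k hwk
    -- l = j or l = j'
    have hlcase : l = j ∨ l = j' := by
      by_contra hc
      push_neg at hc
      obtain ⟨hlj, hlj'⟩ := hc
      rw [hweval, if_neg hlj', hv'eval, if_neg hlj] at hl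
      split_ifs at hl <;> omega
    have hvj : 1 ≤ v j := by omega
    have hvj' : 1 ≤ v j' := by omega
    have hvjj : j' = j → 2 ≤ v j := by
      intro h
      have h0 := hv'eval j'
      rw [if_neg (Ne.symm hkj'), if_pos h] at h0
      rw [h0, h] at hj'
      omega
    rw [hwdef, hv'def] at hwl
    rw [key_identity v i j j' k l hij hij' hki hkj hkj' hvj hvj' hvjj hlcase] at hwl
    by_cases hlj : l = j
    · rw [if_pos hlj] at hwl
      exact ⟨j', hj'v, hu2, hwl⟩
    · rw [if_neg hlj] at hwl
      exact ⟨j, hj, hu', hwl⟩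

/-- **Symmetric exchange** (Herzog–Hibi): in a base polymatroid, for `u, v ∈ P` and
`i` with `u_i > v_i` there is `j` with `u_j < v_j` such that both
`u - e_i + e_j ∈ P` and `v - e_j + e_i ∈ P`. -/
theorem basePolymatroid_symmetric_exchange {p : ℕ} (P : Finset (Fin p → ℕ))
    (hP : IsBasePolymatroid P) (u v : Fin p → ℕ) (hu : u ∈ P) (hv : v ∈ P)
    (i : Fin p) (hi : v i < u i) :
    ∃ j : Fin p, u j < v j ∧ step u i j ∈ P ∧ step v j i ∈ P := by
  exact symm_exchange_aux P hP.2 (∑ k, (u k - v k)) u v le_rfl hu hv i hi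
end

section
/- Let G ⊂ ℕ^p be a finite set. Then G is a generalized polymatroid (i.e., its homogenization G^hom ⊂ ℕ^(p+1) is a base polymatroid) if and only if G satisfies both: (Exchange) for all u, v ∈ G and i ∈ [p] with u_i > v_i, either there is j with u_j < v_j such that u - e_i + e_j ∈ G and v - e_j + e_i ∈ G, or |u| > |v| and u - e_i ∈ G and v + e_i ∈ G; and (Expansion) for all u, v ∈ G with |u| < |v|, there exists j with u_j < v_j such that u + e_j ∈ G and v - e_j ∈ G. -/
open Finset

/-- The Exchange property of a generalized polymatroid. -/
def ExchangeProp {p : ℕ} (G : Finset (Fin p → ℕ)) : Prop :=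
  ∀ u ∈ G, ∀ v ∈ G, ∀ i : Fin p, v i < u i →
    (∃ j : Fin p, u j < v j ∧ step u i j ∈ G ∧ step v j i ∈ G) ∨
    (degSum v < degSum u ∧ (fun k => u k - ev i k) ∈ G ∧ (fun k => v k + ev i k) ∈ G)

/-- The Expansion property of a generalized polymatroid. -/
def ExpansionProp {p : ℕ} (G : Finset (Fin p → ℕ)) : Prop :=
  ∀ u ∈ G, ∀ v ∈ G, degSum u < degSum v →
    ∃ j : Fin p, u j < v j ∧ (fun k => u k + ev j k) ∈ G ∧ (fun k => v k - ev j k) ∈ G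

/-!
Under homogenization, the Exchange condition on `G` (with `j` an old coordinate, or the new last
coordinate) and the Expansion condition (exchanging at the last coordinate) become the *symmetric*
exchange property of `G^hom`: both `u - e_i + e_j` and `v - e_j + e_i` lie in the set. So the
theorem reduces to the fact that a base polymatroid, defined by one-sided exchange, has symmetric
exchange. For this, a homogeneous set `B ⊆ ℕ^q` of degree `N` is encoded as the matroid on
`Fin q × Fin N` whose bases are the sets with fibre cardinalities in `B`: one-sided exchange in `B`
is the base exchange axiom, and symmetric base exchange holds in every matroid because a circuit
and a cocircuit never meet in exactly one element.
-/

section Vectors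

variable {p : ℕ}

lemma ev_self (i : Fin p) : ev i i = 1 := if_pos rfl

lemma step_self (u : Fin p → ℕ) (i : Fin p) : step u i i = u := by
  funext k
  simp [step]

lemma le_degSum (u : Fin p → ℕ) (k : Fin p) : u k ≤ degSum u :=
  Finset.single_le_sum (fun _ _ => Nat.zero_le _) (Finset.mem_univ k)

lemma sum_ev (j : Fin p) : ∑ k, ev j k = 1 := by simp [ev]

lemma degSum_add_ev (u : Fin p → ℕ) (j : Fin p) :
    degSum (fun k => u k + ev j k) = degSum u + 1 := by
  simp only [degSum, Finset.sum_add_distrib, sum_ev]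

lemma degSum_sub_ev_add_one {u : Fin p → ℕ} {i : Fin p} (hi : 0 < u i) :
    degSum (fun k => u k - ev i k) + 1 = degSum u := by
  have hle : ∀ k, ev i k ≤ u k := fun k => by
    unfold ev; split_ifs with h
    exacts [h ▸ hi, Nat.zero_le _]
  rw [degSum, ← sum_ev i, ← Finset.sum_add_distrib]
  exact Finset.sum_congr rfl fun k _ => Nat.sub_add_cancel (hle k)

lemma degSum_step {u : Fin p → ℕ} {i : Fin p} (hi : 0 < u i) (j : Fin p) :
    degSum (step u i j) = degSum u := by
  have := degSum_sub_ev_add_one (u := fun k => u k + ev j k) (i := i) (by omega)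
  rw [degSum_add_ev] at this
  exact Nat.add_right_cancel this

end Vectors

theorem Matroid.IsBase.exists_symm_exchange {α : Type*} {M : Matroid α} {B₁ B₂ : Set α} {x : α}
    (hB₁ : M.IsBase B₁) (hB₂ : M.IsBase B₂) (hx : x ∈ B₁ \ B₂) :
    ∃ y ∈ B₂ \ B₁, M.IsBase (insert y (B₁ \ {x})) ∧ M.IsBase (insert x (B₂ \ {y})) := by
  have hxE : x ∈ M.E := hB₁.subset_ground hx.1
  have hC := hB₂.fundCircuit_isCircuit hxE hx.2
  have hK := M.fundCocircuit_isCocircuit hx.1 hB₁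
  obtain ⟨y, ⟨hyC, hyK⟩, hyx⟩ := (hC.isCocircuit_inter_nontrivial hK
    ⟨x, M.mem_fundCircuit x B₂, M.mem_fundCocircuit x B₁⟩).exists_ne x
  have hy₂ : y ∈ B₂ := by simpa [hyx] using M.fundCircuit_subset_insert x B₂ hyC
  have hy₁ : y ∉ B₁ := ((M.fundCocircuit_subset_insert_compl x B₁ hyK).resolve_left hyx).2
  rw [hB₁.mem_fundCocircuit_iff_mem_fundCircuit, hB₁.indep.mem_fundCircuit_iff
    (by rw [hB₁.closure_eq]; exact hB₂.subset_ground hy₂) hy₁,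
    ← Set.insert_sdiff_singleton_comm hyx] at hyK
  rw [hB₂.indep.mem_fundCircuit_iff (by rw [hB₂.closure_eq]; exact hxE) hx.2,
    ← Set.insert_sdiff_singleton_comm (Ne.symm hyx)] at hyC
  exact ⟨y, ⟨hy₂, hy₁⟩, hB₁.exchange_isBase_of_indep hy₁ hyK, hB₂.exchange_isBase_of_indep hx.2 hyC⟩

section LevelSets

variable {q N : ℕ}

noncomputable def countVec (S : Set (Fin q × Fin N)) (k : Fin q) : ℕ := (Prod.mk k ⁻¹' S).ncard

def levelSet (a : Fin q → ℕ) : Set (Fin q × Fin N) := {e | e.2 < a e.1}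

lemma countVec_levelSet {a : Fin q → ℕ} (ha : ∀ k, a k ≤ N) :
    countVec (levelSet (N := N) a) = a := by
  funext k
  simp [countVec, levelSet, Set.ncard_eq_toFinset_card', Fin.card_filter_val_lt, ha k]

lemma countVec_insert {S : Set (Fin q × Fin N)} {f : Fin q × Fin N} (hf : f ∉ S) (k : Fin q) :
    countVec (insert f S) k = countVec S k + ev f.1 k := by
  obtain ⟨i, t⟩ := f
  by_cases hk : k = i
  · subst hk
    have : Prod.mk k ⁻¹' insert (k, t) S = insert t (Prod.mk k ⁻¹' S) := by ext; simp
    rw [countVec, countVec, this, Set.ncard_insert_of_notMem (show t ∉ Prod.mk k ⁻¹' S from hf)]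
    simp [ev]
  · have : Prod.mk k ⁻¹' insert (i, t) S = Prod.mk k ⁻¹' S := by ext; simp [hk]
    simp [countVec, this, ev, hk]

lemma countVec_diff_singleton_add {S : Set (Fin q × Fin N)} {e : Fin q × Fin N} (he : e ∈ S)
    (k : Fin q) : countVec (S \ {e}) k + ev e.1 k = countVec S k := by
  rw [← countVec_insert (fun h => h.2 rfl), Set.insert_sdiff_singleton, Set.insert_eq_of_mem he]

lemma countVec_exchange {S : Set (Fin q × Fin N)} {e f : Fin q × Fin N} (he : e ∈ S) (hf : f ∉ S) :
    countVec (insert f (S \ {e})) = step (countVec S) e.1 f.1 := by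
  funext k
  rw [countVec_insert (fun h => hf h.1), step, ← countVec_diff_singleton_add he k]
  omega

lemma exists_mem_of_countVec_lt {X Y : Set (Fin q × Fin N)} {j : Fin q}
    (h : countVec X j < countVec Y j) : ∃ s, (j, s) ∈ Y ∧ (j, s) ∉ X :=
  Set.exists_mem_notMem_of_ncard_lt_ncard h

lemma exchangeProperty_countVec_mem {B : Set (Fin q → ℕ)}
    (hB : ∀ u ∈ B, ∀ v ∈ B, ∀ i, v i < u i → ∃ j, u j < v j ∧ step u i j ∈ B) :
    Matroid.ExchangeProperty (fun S : Set (Fin q × Fin N) => countVec S ∈ B) := by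
  rintro X Y hX hY e ⟨heX, heY⟩
  suffices ∃ b ∈ Y \ X, step (countVec X) e.1 b.1 ∈ B by
    obtain ⟨b, hb, hstep⟩ := this
    exact ⟨b, hb, by simpa only [countVec_exchange heX hb.2]⟩
  by_cases hlt : countVec Y e.1 < countVec X e.1
  · obtain ⟨j, hj, hstep⟩ := hB _ hX _ hY e.1 hlt
    obtain ⟨s, hsY, hsX⟩ := exists_mem_of_countVec_lt hj
    exact ⟨(j, s), ⟨hsY, hsX⟩, hstep⟩
  · have hlt' : countVec (X \ {e}) e.1 < countVec Y e.1 := by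
      have := countVec_diff_singleton_add heX e.1
      rw [ev_self] at this
      omega
    obtain ⟨s, hsY, hsX⟩ := exists_mem_of_countVec_lt hlt'
    have hse : (e.1, s) ≠ e := fun h => heY (h ▸ hsY)
    refine ⟨(e.1, s), ⟨hsY, fun h => hsX ⟨h, hse⟩⟩, ?_⟩
    rwa [step_self]

end LevelSets

theorem IsBasePolymatroid.exists_symm_exchange {q : ℕ} {B : Finset (Fin q → ℕ)}
    (hB : IsBasePolymatroid B) {u v : Fin q → ℕ} (hu : u ∈ B) (hv : v ∈ B) {i : Fin q}
    (hi : v i < u i) : ∃ j, u j < v j ∧ step u i j ∈ B ∧ step v j i ∈ B := by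
  have hbound : ∀ a ∈ B, ∀ k, a k ≤ degSum u := fun a ha k => hB.1 a ha u hu ▸ le_degSum a k
  let M : Matroid (Fin q × Fin (degSum u)) := Matroid.ofExistsFiniteIsBase Set.univ
    (fun S => countVec S ∈ (B : Set (Fin q → ℕ)))
    ⟨levelSet u, by simpa [countVec_levelSet (hbound u hu)], Set.toFinite _⟩
    (exchangeProperty_countVec_mem hB.2) (fun _ _ => Set.subset_univ _)
  have hbase : ∀ a ∈ B, M.IsBase (levelSet a) := fun a ha => by
    simpa [M, countVec_levelSet (hbound a ha)]
  have hx : (i, ⟨v i, hi.trans_le (hbound u hu i)⟩) ∈ levelSet u \ levelSet v :=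
    ⟨hi, (lt_irrefl (v i) ·)⟩
  obtain ⟨⟨j, s⟩, ⟨hsv, hsu⟩, h₁, h₂⟩ := (hbase u hu).exists_symm_exchange (hbase v hv) hx
  have h₁ : countVec _ ∈ B := h₁
  have h₂ : countVec _ ∈ B := h₂
  rw [countVec_exchange hx.1 hsu, countVec_levelSet (hbound u hu)] at h₁
  rw [countVec_exchange hsv hx.2, countVec_levelSet (hbound v hv)] at h₂
  exact ⟨j, (not_lt.1 hsu).trans_lt hsv, h₁, h₂⟩

section Homogenization

variable {p : ℕ}

lemma degSum_snoc (a : Fin p → ℕ) (t : ℕ) :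
    degSum (Fin.snoc a t : Fin (p + 1) → ℕ) = degSum a + t := by
  simp [degSum, Fin.sum_univ_castSucc]

lemma degSum_le_maxDeg {G : Finset (Fin p → ℕ)} {a : Fin p → ℕ} (ha : a ∈ G) :
    degSum a ≤ maxDeg G :=
  Finset.le_sup ha

lemma snoc_mem_homog_iff {G : Finset (Fin p → ℕ)} {a : Fin p → ℕ} {t : ℕ} :
    Fin.snoc a t ∈ homog G ↔ a ∈ G ∧ t = maxDeg G - degSum a := by
  simp [homog, Fin.snoc_injective2.eq_iff, eq_comm (a := t)]

lemma snoc_mem_homog {G : Finset (Fin p → ℕ)} {a : Fin p → ℕ} (ha : a ∈ G) :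
    Fin.snoc a (maxDeg G - degSum a) ∈ homog G :=
  snoc_mem_homog_iff.2 ⟨ha, rfl⟩

lemma degSum_of_mem_homog {G : Finset (Fin p → ℕ)} {w : Fin (p + 1) → ℕ} (hw : w ∈ homog G) :
    degSum w = maxDeg G := by
  obtain ⟨a, ha, rfl⟩ := Finset.mem_image.1 hw
  have := degSum_le_maxDeg ha
  rw [degSum_snoc]
  omega

lemma step_snoc_castSucc_castSucc (u : Fin p → ℕ) (s : ℕ) (i j : Fin p) :
    step (Fin.snoc u s) i.castSucc j.castSucc = Fin.snoc (step u i j) s := by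
  funext k
  induction k using Fin.lastCases <;> simp [step, ev, (Fin.castSucc_ne_last _).symm]

lemma step_snoc_castSucc_last (u : Fin p → ℕ) (s : ℕ) (i : Fin p) :
    step (Fin.snoc u s) i.castSucc (Fin.last p) = Fin.snoc (fun k => u k - ev i k) (s + 1) := by
  funext k
  induction k using Fin.lastCases <;> simp [step, ev, (Fin.castSucc_ne_last _).symm]

lemma step_snoc_last_castSucc (u : Fin p → ℕ) (s : ℕ) (j : Fin p) :
    step (Fin.snoc u s) (Fin.last p) j.castSucc = Fin.snoc (fun k => u k + ev j k) (s - 1) := by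
  funext k
  induction k using Fin.lastCases <;> simp [step, ev, (Fin.castSucc_ne_last _).symm]

end Homogenization

section GPolymatroid

variable {p : ℕ} {G : Finset (Fin p → ℕ)}

lemma IsGPolymatroid.exchangeProp (hG : IsGPolymatroid G) : ExchangeProp G := by
  intro u hu v hv i hi
  obtain ⟨j, hj, h₁, h₂⟩ := IsBasePolymatroid.exists_symm_exchange hG (snoc_mem_homog hu)
    (snoc_mem_homog hv) (i := i.castSucc) (by simpa using hi)
  induction j using Fin.lastCases with
  | last =>
    rw [step_snoc_castSucc_last, snoc_mem_homog_iff] at h₁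
    rw [step_snoc_last_castSucc, snoc_mem_homog_iff] at h₂
    simp only [Fin.snoc_last] at hj
    exact Or.inr ⟨by omega, h₁.1, h₂.1⟩
  | cast j =>
    rw [step_snoc_castSucc_castSucc, snoc_mem_homog_iff] at h₁ h₂
    simp only [Fin.snoc_castSucc] at hj
    exact Or.inl ⟨j, hj, h₁.1, h₂.1⟩

lemma IsGPolymatroid.expansionProp (hG : IsGPolymatroid G) : ExpansionProp G := by
  intro u hu v hv huv
  have hlt : maxDeg G - degSum v < maxDeg G - degSum u := by
    have := degSum_le_maxDeg hv
    omega
  obtain ⟨j, hj, h₁, h₂⟩ := IsBasePolymatroid.exists_symm_exchange hG (snoc_mem_homog hu)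
    (snoc_mem_homog hv) (i := Fin.last p) (by simpa using hlt)
  induction j using Fin.lastCases with
  | last => simp only [Fin.snoc_last] at hj; omega
  | cast j =>
    rw [step_snoc_last_castSucc, snoc_mem_homog_iff] at h₁
    rw [step_snoc_castSucc_last, snoc_mem_homog_iff] at h₂
    simp only [Fin.snoc_castSucc] at hj
    exact ⟨j, hj, h₁.1, h₂.1⟩

lemma isGPolymatroid_of_exchangeProp_of_expansionProp (hex : ExchangeProp G)
    (hexp : ExpansionProp G) : IsGPolymatroid G := by
  refine ⟨fun U hU V hV => by rw [degSum_of_mem_homog hU, degSum_of_mem_homog hV], ?_⟩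
  rintro _ hU _ hV i hi
  obtain ⟨u, hu, rfl⟩ := Finset.mem_image.1 hU
  obtain ⟨v, hv, rfl⟩ := Finset.mem_image.1 hV
  have hdu := degSum_le_maxDeg hu
  have hdv := degSum_le_maxDeg hv
  induction i using Fin.lastCases with
  | last =>
    simp only [Fin.snoc_last] at hi
    obtain ⟨j, hj, hmem, -⟩ := hexp u hu v hv (by omega)
    refine ⟨j.castSucc, by simpa using hj, ?_⟩
    rw [step_snoc_last_castSucc, snoc_mem_homog_iff, degSum_add_ev]
    exact ⟨hmem, by omega⟩
  | cast i =>
    simp only [Fin.snoc_castSucc] at hi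
    have hui : 0 < u i := by omega
    rcases hex u hu v hv i hi with ⟨j, hj, hmem, -⟩ | ⟨hvu, hmem, -⟩
    · refine ⟨j.castSucc, by simpa using hj, ?_⟩
      rw [step_snoc_castSucc_castSucc, snoc_mem_homog_iff, degSum_step hui]
      exact ⟨hmem, rfl⟩
    · refine ⟨Fin.last p, by simp only [Fin.snoc_last]; omega, ?_⟩
      have := degSum_sub_ev_add_one hui
      rw [step_snoc_castSucc_last, snoc_mem_homog_iff]
      exact ⟨hmem, by omega⟩

end GPolymatroid

/-- A finite set `G ⊆ ℕ^p` is a generalized polymatroid (its homogenization is a base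
polymatroid) if and only if it satisfies the Exchange and Expansion properties. -/
theorem isGPolymatroid_iff_exchange_and_expansion {p : ℕ} (G : Finset (Fin p → ℕ)) :
    IsGPolymatroid G ↔ ExchangeProp G ∧ ExpansionProp G :=
  ⟨fun hG => ⟨hG.exchangeProp, hG.expansionProp⟩,
    fun ⟨hex, hexp⟩ => isGPolymatroid_of_exchangeProp_of_expansionProp hex hexp⟩
end

section
/- Let C ⊂ ℕ^p be a cave. Then for every u ∈ C and every index i ∈ [p] such that the truncation C_{u + e_i} = {a ∈ C : a ≥ u + e_i} is nonempty, we have u + e_i ∈ C. -/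
open Finset

open scoped Classical

/-- The `b`-truncation `A_b = {a ∈ A : a ≥ b}`. -/
noncomputable def trunc {p : ℕ} (C : Finset (Fin p → ℕ)) (b : Fin p → ℕ) :
    Finset (Fin p → ℕ) :=
  C.filter (fun a => ∀ i, b i ≤ a i)

/-- The top of a finite set: the elements of maximal coordinate sum. -/
noncomputable def topOf {p : ℕ} (A : Finset (Fin p → ℕ)) : Finset (Fin p → ℕ) :=
  A.filter (fun a => degSum a = maxDeg A)

/-- The stalactite `St(u; I) = {u - Σ_{ℓ ∈ J} e_ℓ : J ⊆ I}`. -/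
noncomputable def stalactite {p : ℕ} (u : Fin p → ℕ) (I : Finset (Fin p)) :
    Finset (Fin p → ℕ) :=
  I.powerset.image (fun J => fun k => u k - (if k ∈ J then 1 else 0))

/-- The directions `ℓ` in which `u` has a neighbor `u - e_ℓ + e_j` in `V`. -/
noncomputable def stalDirs {p : ℕ} (u : Fin p → ℕ) (V : Finset (Fin p → ℕ)) :
    Finset (Fin p) :=
  Finset.univ.filter (fun ℓ => 0 < u ℓ ∧ ∃ j, j ≠ ℓ ∧ step u ℓ j ∈ V)

/-- The lexicographic order on `ℕ^p` induced by the ordering `σ` of `[p]`. -/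
def lexLt {p : ℕ} (σ : Equiv.Perm (Fin p)) (u v : Fin p → ℕ) : Prop :=
  ∃ i : Fin p, u (σ i) < v (σ i) ∧ ∀ j, j < i → u (σ j) = v (σ j)

/-- Condition (b) in the definition of a cave: for every ordering of `[p]`,
the set is the union of the stalactites of its top elements, each taken with
respect to the lex-smaller top elements. -/
noncomputable def CaveCondB {p : ℕ} (A : Finset (Fin p → ℕ)) : Prop :=
  ∀ σ : Equiv.Perm (Fin p),
    A = (topOf A).biUnion (fun a =>
      stalactite a (stalDirs a ((topOf A).filter (fun b => lexLt σ b a))))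

/-- A cave: a finite subset of `ℕ^p` all of whose truncations `A = C_b` satisfy
(a) `A^top` is a base polymatroid, (b) the stalactite decomposition condition for
every ordering of `[p]`, and (c) if `b ≠ 0` then `A` is a generalized polymatroid. -/
noncomputable def IsCave {p : ℕ} (C : Finset (Fin p → ℕ)) : Prop :=
  ∀ b : Fin p → ℕ,
    IsBasePolymatroid (topOf (trunc C b)) ∧
    CaveCondB (trunc C b) ∧
    (b ≠ (fun _ => 0) → IsGPolymatroid (trunc C b))

/- ===== auxiliary lemmas for the proof ===== -/

lemma cave_mem_trunc {p : ℕ} {C : Finset (Fin p → ℕ)} {b x : Fin p → ℕ} :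
    x ∈ trunc C b ↔ x ∈ C ∧ ∀ k, b k ≤ x k := by
  unfold trunc; exact Finset.mem_filter

lemma cave_mem_topOf {p : ℕ} {A : Finset (Fin p → ℕ)} {x : Fin p → ℕ} :
    x ∈ topOf A ↔ x ∈ A ∧ degSum x = maxDeg A := by
  unfold topOf; exact Finset.mem_filter

lemma cave_mem_stalactite {p : ℕ} {a : Fin p → ℕ} {I : Finset (Fin p)} {x : Fin p → ℕ} :
    x ∈ stalactite a I ↔ ∃ S, S ⊆ I ∧ (fun k => a k - (if k ∈ S then 1 else 0)) = x := by
  unfold stalactite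
  simp only [Finset.mem_image, Finset.mem_powerset]

lemma cave_mem_stalDirs {p : ℕ} {t : Fin p → ℕ} {V : Finset (Fin p → ℕ)} {ℓ : Fin p} :
    ℓ ∈ stalDirs t V ↔ 0 < t ℓ ∧ ∃ j, j ≠ ℓ ∧ step t ℓ j ∈ V := by
  unfold stalDirs
  simp only [Finset.mem_filter, Finset.mem_univ, true_and]

lemma exists_sorting_perm {p : ℕ} (r : Fin p → ℕ) :
    ∃ σ : Equiv.Perm (Fin p), ∀ k₁ k₂, r k₁ < r k₂ → σ.symm k₁ < σ.symm k₂ := by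
  refine ⟨Tuple.sort r, fun k₁ k₂ h => ?_⟩
  by_contra h'
  push_neg at h'
  have h2 := Tuple.monotone_sort r h'
  simp only [Function.comp_apply, Equiv.apply_symm_apply] at h2
  omega

lemma lexLt_pos {p : ℕ} {σ : Equiv.Perm (Fin p)} {a : Fin p → ℕ} {ℓ j : Fin p}
    (hjl : j ≠ ℓ) (h : lexLt σ (step a ℓ j) a) : σ.symm ℓ < σ.symm j := by
  obtain ⟨r, hr1, hr2⟩ := h
  have hσr : σ r = ℓ := by
    by_contra hne
    have h1 : step a ℓ j (σ r) = a (σ r) + (if σ r = j then 1 else 0)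
        - (if σ r = ℓ then 1 else 0) := rfl
    rw [if_neg hne] at h1
    by_cases hj : σ r = j
    · rw [if_pos hj] at h1; omega
    · rw [if_neg hj] at h1; omega
  have hrl : σ.symm ℓ = r := by rw [← hσr, Equiv.symm_apply_apply]
  rw [hrl]
  by_contra hle
  push_neg at hle
  have hne : σ.symm j ≠ r := by
    intro hh
    apply hjl
    rw [← hσr, ← hh, Equiv.apply_symm_apply]
  have heq := hr2 (σ.symm j) (lt_of_le_of_ne hle hne)
  rw [Equiv.apply_symm_apply] at heq
  have h2 : step a ℓ j j = a j + (if j = j then 1 else 0) - (if j = ℓ then 1 else 0) := rfl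
  rw [if_pos rfl, if_neg hjl] at h2
  omega

lemma lexLt_mk {p : ℕ} {σ : Equiv.Perm (Fin p)} {t : Fin p → ℕ} {ℓ j : Fin p}
    (hjl : j ≠ ℓ) (htl : 0 < t ℓ) (hpos : σ.symm ℓ < σ.symm j) :
    lexLt σ (step t ℓ j) t := by
  refine ⟨σ.symm ℓ, ?_, ?_⟩
  · rw [Equiv.apply_symm_apply]
    have h2 : step t ℓ j ℓ = t ℓ + (if ℓ = j then 1 else 0) - (if ℓ = ℓ then 1 else 0) := rfl
    rw [if_pos rfl, if_neg (Ne.symm hjl)] at h2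
    omega
  · intro s hs
    have h1 : σ s ≠ ℓ := by
      intro hh
      have : s = σ.symm ℓ := by rw [← hh, Equiv.symm_apply_apply]
      exact absurd this (ne_of_lt hs)
    have h2 : σ s ≠ j := by
      intro hh
      have hsj : s = σ.symm j := by rw [← hh, Equiv.symm_apply_apply]
      rw [hsj] at hs
      exact absurd hs (not_lt.mpr hpos.le)
    have h3 : step t ℓ j (σ s) = t (σ s) + (if σ s = j then 1 else 0)
        - (if σ s = ℓ then 1 else 0) := rfl
    rw [if_neg h2, if_neg h1] at h3
    omega

lemma cave_massage {p : ℕ} (P : Finset (Fin p → ℕ))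
    (hex : ∀ s ∈ P, ∀ v ∈ P, ∀ m : Fin p, v m < s m → ∃ j, s j < v j ∧ step s m j ∈ P)
    (u a : Fin p → ℕ) (i : Fin p)
    (haP : a ∈ P) (hai : a i = u i) :
    ∀ N : ℕ, ∀ s ∈ P, u i < s i →
      (∑ k ∈ Finset.univ.erase i, (s k - a k)) + s i ≤ N →
      ∃ t ∈ P, t i = u i + 1 ∧ ∀ k, k ≠ i → t k ≤ a k := by
  intro N
  induction N with
  | zero => intro s _ hsi hμ; omega
  | succ N IH =>
    intro s hs hsi hμ
    by_cases hcase : ∃ m, m ≠ i ∧ a m < s m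
    · obtain ⟨m, hmi, hm⟩ := hcase
      obtain ⟨j, hj, hstep⟩ := hex s hs a haP m hm
      have hji : j ≠ i := by intro hh; rw [hh] at hj; omega
      have hjm : j ≠ m := by intro hh; rw [hh] at hj; omega
      have hs'val : ∀ k, step s m j k = s k + (if k = j then 1 else 0)
          - (if k = m then 1 else 0) := fun k => rfl
      have hs'i : step s m j i = s i := by
        have h1 := hs'val i
        rw [if_neg (Ne.symm hji), if_neg (Ne.symm hmi)] at h1
        omega
      have hmE : m ∈ Finset.univ.erase i := Finset.mem_erase.mpr ⟨hmi, Finset.mem_univ m⟩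
      have hA : (step s m j m - a m) + ∑ k ∈ (Finset.univ.erase i).erase m, (step s m j k - a k)
          = ∑ k ∈ Finset.univ.erase i, (step s m j k - a k) :=
        Finset.add_sum_erase _ (fun k => step s m j k - a k) hmE
      have hB2 : (s m - a m) + ∑ k ∈ (Finset.univ.erase i).erase m, (s k - a k)
          = ∑ k ∈ Finset.univ.erase i, (s k - a k) :=
        Finset.add_sum_erase _ (fun k => s k - a k) hmE
      have hcong : ∑ k ∈ (Finset.univ.erase i).erase m, (step s m j k - a k)
          = ∑ k ∈ (Finset.univ.erase i).erase m, (s k - a k) := by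
        refine Finset.sum_congr rfl fun k hk => ?_
        have hkm : k ≠ m := (Finset.mem_erase.mp hk).1
        have h1 := hs'val k
        by_cases hkj : k = j
        · subst hkj; rw [if_pos rfl, if_neg hkm] at h1; omega
        · rw [if_neg hkj, if_neg hkm] at h1; omega
      have hm' : step s m j m + 1 = s m := by
        have h1 := hs'val m
        rw [if_neg (Ne.symm hjm), if_pos rfl] at h1
        omega
      exact IH (step s m j) hstep (by rw [hs'i]; exact hsi) (by omega)
    · push_neg at hcase
      by_cases hterm : s i = u i + 1
      · exact ⟨s, hs, hterm, fun k hk => hcase k hk⟩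
      · have hia : a i < s i := by omega
        obtain ⟨j, hj, hstep⟩ := hex s hs a haP i hia
        have hji : j ≠ i := by intro hh; rw [hh] at hj; omega
        have hs'val : ∀ k, step s i j k = s k + (if k = j then 1 else 0)
            - (if k = i then 1 else 0) := fun k => rfl
        have hs'i : step s i j i = s i - 1 := by
          have h1 := hs'val i
          rw [if_neg (Ne.symm hji), if_pos rfl] at h1
          omega
        have hsum0 : ∑ k ∈ Finset.univ.erase i, (step s i j k - a k) = 0 := by
          refine Finset.sum_eq_zero fun k hk => ?_
          have hki := (Finset.mem_erase.mp hk).1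
          have h1 := hs'val k
          by_cases hkj : k = j
          · subst hkj; rw [if_pos rfl, if_neg hki] at h1; omega
          · rw [if_neg hkj, if_neg hki] at h1
            have := hcase k hki
            omega
        apply IH (step s i j) hstep
        · rw [hs'i]; omega
        · rw [hsum0, hs'i]; omega
/-- In a cave `C`, if `u ∈ C` and the truncation at `u + e_i` is nonempty,
then `u + e_i ∈ C`. -/
theorem cave_add_single_mem {p : ℕ} (C : Finset (Fin p → ℕ)) (hC : IsCave C)
    (u : Fin p → ℕ) (hu : u ∈ C) (i : Fin p)
    (hne : (trunc C (fun k => u k + ev i k)).Nonempty) :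
    (fun k => u k + ev i k) ∈ C := by
  classical
  obtain ⟨hdegP, hexP⟩ :
      (∀ x ∈ topOf (trunc C u), ∀ y ∈ topOf (trunc C u), degSum x = degSum y) ∧
      (∀ x ∈ topOf (trunc C u), ∀ y ∈ topOf (trunc C u), ∀ m : Fin p, y m < x m →
        ∃ j : Fin p, x j < y j ∧ step x m j ∈ topOf (trunc C u)) := (hC u).1
  have hB : ∀ σ : Equiv.Perm (Fin p), trunc C u =
      (topOf (trunc C u)).biUnion (fun a =>
        stalactite a (stalDirs a ((topOf (trunc C u)).filter (fun b => lexLt σ b a)))) :=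
    (hC u).2.1
  have hfl : ∀ s ∈ topOf (trunc C u), ∀ k, u k ≤ s k := by
    intro s hs k
    exact (cave_mem_trunc.mp (cave_mem_topOf.mp hs).1).2 k
  -- a permutation with `i` in the very first position
  obtain ⟨σ₀, hσ₀i⟩ : ∃ σ : Equiv.Perm (Fin p), ((σ.symm i : Fin p) : ℕ) = 0 :=
    ⟨Equiv.swap ⟨0, i.pos⟩ i, by simp [Equiv.symm_swap, Equiv.swap_apply_right]⟩
  -- covering of u
  have huB : u ∈ trunc C u := cave_mem_trunc.mpr ⟨hu, fun k => le_refl _⟩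
  have huB2 := huB
  rw [hB σ₀] at huB2
  obtain ⟨a, haTop, haSt⟩ := Finset.mem_biUnion.mp huB2
  obtain ⟨S, hSsub, hSeq⟩ := cave_mem_stalactite.mp haSt
  have hu_eq : ∀ k, a k - (if k ∈ S then 1 else 0) = u k := fun k => congrFun hSeq k
  have hak : ∀ k ∈ S, 0 < a k := fun k hk => (cave_mem_stalDirs.mp (hSsub hk)).1
  by_cases hiS : i ∈ S
  · -- easy branch : i ∈ S
    have hmem : (fun k => u k + ev i k) ∈ trunc C u := by
      rw [hB σ₀]
      apply Finset.mem_biUnion.mpr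
      refine ⟨a, haTop, cave_mem_stalactite.mpr
        ⟨S.erase i, (Finset.erase_subset _ _).trans hSsub, ?_⟩⟩
      funext k
      have h1 := hu_eq k
      have hevk : ev i k = (if k = i then 1 else 0) := rfl
      by_cases hki : k = i
      · subst hki
        rw [if_pos hiS] at h1
        have h2 := hak k hiS
        rw [if_neg (Finset.notMem_erase k S), if_pos rfl] at *
        omega
      · rw [if_neg hki] at hevk
        by_cases hkS : k ∈ S
        · rw [if_pos hkS] at h1
          rw [if_pos (Finset.mem_erase.mpr ⟨hki, hkS⟩)]
          omega
        · rw [if_neg hkS] at h1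
          rw [if_neg (fun hh => hkS (Finset.mem_erase.mp hh).2)]
          omega
    exact (cave_mem_trunc.mp hmem).1
  · -- main branch : i ∉ S
    have hai : a i = u i := by
      have h1 := hu_eq i; rw [if_neg hiS] at h1; omega
    obtain ⟨v, hv⟩ := hne
    have hvC : v ∈ C := (cave_mem_trunc.mp hv).1
    have hvge : ∀ k, u k + ev i k ≤ v k := (cave_mem_trunc.mp hv).2
    have hvB : v ∈ trunc C u :=
      cave_mem_trunc.mpr ⟨hvC, fun k => le_trans (Nat.le_add_right _ _) (hvge k)⟩
    have hvB2 := hvB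
    rw [hB σ₀] at hvB2
    obtain ⟨a', ha'Top, ha'St⟩ := Finset.mem_biUnion.mp hvB2
    obtain ⟨S', _, hS'eq⟩ := cave_mem_stalactite.mp ha'St
    have ha'i : u i < a' i := by
      have h1 := congrFun hS'eq i
      have h2 := hvge i
      have hevi : ev i i = 1 := if_pos rfl
      by_cases hiS' : i ∈ S'
      · rw [if_pos hiS'] at h1; omega
      · rw [if_neg hiS'] at h1; omega
    -- massage: a top t with t i = u i + 1 and t ≤ a away from i
    obtain ⟨t, htP, hti, htle⟩ := cave_massage (topOf (trunc C u)) hexP u a i haTop hai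
      ((∑ k ∈ Finset.univ.erase i, (a' k - a k)) + a' i) a' ha'Top ha'i (le_refl _)
    have htu : ∀ k, u k ≤ t k := hfl t htP
    have hdeg' : ∑ k, t k = ∑ k, a k := hdegP t htP a haTop
    have hsplit_t : t i + ∑ k ∈ Finset.univ.erase i, t k = ∑ k, t k :=
      Finset.add_sum_erase _ t (Finset.mem_univ i)
    have hsplit_a : a i + ∑ k ∈ Finset.univ.erase i, a k = ∑ k, a k :=
      Finset.add_sum_erase _ a (Finset.mem_univ i)
    have hEsum : ∑ k ∈ Finset.univ.erase i, a k
        = (∑ k ∈ Finset.univ.erase i, t k) + ∑ k ∈ Finset.univ.erase i, (a k - t k) := by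
      rw [← Finset.sum_add_distrib]
      refine Finset.sum_congr rfl fun k hk => ?_
      have := htle k (Finset.mem_erase.mp hk).1
      omega
    have hdsum : ∑ k ∈ Finset.univ.erase i, (a k - t k) = 1 := by omega
    obtain ⟨ℓh, hℓhE, hℓh1⟩ : ∃ ℓh ∈ Finset.univ.erase i, a ℓh - t ℓh ≠ 0 := by
      by_contra hcon
      push_neg at hcon
      have h0 := Finset.sum_eq_zero hcon
      omega
    have hℓhi : ℓh ≠ i := (Finset.mem_erase.mp hℓhE).1
    have hsp : (a ℓh - t ℓh) + ∑ k ∈ (Finset.univ.erase i).erase ℓh, (a k - t k)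
        = ∑ k ∈ Finset.univ.erase i, (a k - t k) :=
      Finset.add_sum_erase _ (fun k => a k - t k) hℓhE
    have hrest : ∀ k, k ≠ i → k ≠ ℓh → a k - t k = 0 := by
      intro k hki hkl
      have h9 : ∑ k ∈ (Finset.univ.erase i).erase ℓh, (a k - t k) = 0 := by omega
      exact Finset.sum_eq_zero_iff.mp h9 k
        (Finset.mem_erase.mpr ⟨hkl, Finset.mem_erase.mpr ⟨hki, Finset.mem_univ k⟩⟩)
    have hdℓh : a ℓh = t ℓh + 1 := by
      have h8 := htle ℓh hℓhi
      omega
    have hℓhS : ℓh ∈ S := by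
      by_contra hcon
      have h1 := hu_eq ℓh
      rw [if_neg hcon] at h1
      have h2 := htu ℓh
      omega
    -- the shape of t
    have hiK : i ∉ S.erase ℓh := fun hh => hiS (Finset.mem_erase.mp hh).2
    have htform : ∀ k, t k = u k + ev i k + (if k ∈ S.erase ℓh then 1 else 0) := by
      intro k
      have hevk : ev i k = (if k = i then 1 else 0) := rfl
      by_cases hki : k = i
      · subst hki
        rw [if_pos rfl] at hevk
        rw [if_neg hiK]
        omega
      · rw [if_neg hki] at hevk
        by_cases hkl : k = ℓh
        · subst hkl
          rw [if_neg (Finset.notMem_erase k S)]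
          have h1 := hu_eq k
          rw [if_pos hℓhS] at h1
          have h2 := hak k hℓhS
          omega
        · have h3 := hrest k hki hkl
          have h5 := htle k hki
          by_cases hkS : k ∈ S
          · rw [if_pos (Finset.mem_erase.mpr ⟨hkl, hkS⟩)]
            have h1 := hu_eq k
            rw [if_pos hkS] at h1
            have h2 := hak k hkS
            omega
          · rw [if_neg (fun hh => hkS (Finset.mem_erase.mp hh).2)]
            have h1 := hu_eq k
            rw [if_neg hkS] at h1
            omega
    -- key neighbours of t
    have hKey : ∀ ℓ' ∈ S.erase ℓh, ∃ j : Fin p, j ≠ ℓ' ∧ step t ℓ' j ∈ topOf (trunc C u) ∧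
        (j = ℓh ∨ ((σ₀.symm ℓ' : ℕ) < (σ₀.symm j : ℕ))) := by
      intro ℓ' hℓ'
      have hℓ'S : ℓ' ∈ S := (Finset.mem_erase.mp hℓ').2
      have hℓ'ℓh : ℓ' ≠ ℓh := (Finset.mem_erase.mp hℓ').1
      have hℓ'i : ℓ' ≠ i := fun hh => hiS (hh ▸ hℓ'S)
      obtain ⟨hapos, j', hj'ℓ, hj'V⟩ := cave_mem_stalDirs.mp (hSsub hℓ'S)
      have hnTop : step a ℓ' j' ∈ topOf (trunc C u) := (Finset.mem_filter.mp hj'V).1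
      have hnLex : lexLt σ₀ (step a ℓ' j') a := (Finset.mem_filter.mp hj'V).2
      have hposℓj : σ₀.symm ℓ' < σ₀.symm j' := lexLt_pos hj'ℓ hnLex
      have hj'i : j' ≠ i := by
        intro hh
        rw [hh] at hposℓj
        have h1 := Fin.lt_def.mp hposℓj
        omega
      have haℓ' : a ℓ' = u ℓ' + 1 := by
        have h1 := hu_eq ℓ'; rw [if_pos hℓ'S] at h1
        have h2 := hak ℓ' hℓ'S
        omega
      have htℓ' : t ℓ' = u ℓ' + 1 := by
        have hevk : ev i ℓ' = 0 := if_neg hℓ'i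
        have h5 := htform ℓ'
        rw [if_pos hℓ'] at h5
        omega
      have hnℓ' : step a ℓ' j' ℓ' = a ℓ' - 1 := by
        have h6 : step a ℓ' j' ℓ' = a ℓ' + (if ℓ' = j' then 1 else 0)
            - (if ℓ' = ℓ' then 1 else 0) := rfl
        rw [if_pos rfl, if_neg (Ne.symm hj'ℓ)] at h6
        omega
      obtain ⟨j, hjlt, hjTop⟩ := hexP t htP (step a ℓ' j') hnTop ℓ' (by rw [hnℓ']; omega)
      have hjℓ' : j ≠ ℓ' := by
        intro hh
        rw [hh, hnℓ'] at hjlt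
        omega
      refine ⟨j, hjℓ', hjTop, ?_⟩
      by_cases hjj' : j = j'
      · right
        rw [hjj']
        exact Fin.lt_def.mp hposℓj
      · left
        by_contra hjℓh
        have h6 : step a ℓ' j' j = a j + (if j = j' then 1 else 0)
            - (if j = ℓ' then 1 else 0) := rfl
        rw [if_neg hjj', if_neg hjℓ'] at h6
        have h7 := htform j
        by_cases hji : j = i
        · subst hji
          rw [if_neg hiK] at h7
          have hevk : ev j j = 1 := if_pos rfl
          omega
        · have hevk : ev i j = 0 := if_neg hji
          by_cases hjK : j ∈ S.erase ℓh
          · rw [if_pos hjK] at h7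
            have hjS : j ∈ S := (Finset.mem_erase.mp hjK).2
            have h1 := hu_eq j; rw [if_pos hjS] at h1
            have h2 := hak j hjS
            omega
          · rw [if_neg hjK] at h7
            have hjS : j ∉ S := fun hh => hjK (Finset.mem_erase.mpr ⟨hjℓh, hh⟩)
            have h1 := hu_eq j; rw [if_neg hjS] at h1
            omega
    choose jf hjf1 hjf2 hjf3 using hKey
    -- sort by a rank putting ℓh last
    obtain ⟨σ', hσ'⟩ := exists_sorting_perm (fun k => if k = ℓh then p else (σ₀.symm k : ℕ))
    have hedge : ∀ ℓ' (h : ℓ' ∈ S.erase ℓh), σ'.symm ℓ' < σ'.symm (jf ℓ' h) := by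
      intro ℓ' h
      apply hσ'
      have hℓ'ℓh : ℓ' ≠ ℓh := (Finset.mem_erase.mp h).1
      rw [if_neg hℓ'ℓh]
      rcases hjf3 ℓ' h with hcase | hcase
      · rw [hcase, if_pos rfl]
        exact (σ₀.symm ℓ').isLt
      · by_cases hjℓh : jf ℓ' h = ℓh
        · rw [if_pos hjℓh]
          exact (σ₀.symm ℓ').isLt
        · rw [if_neg hjℓh]
          exact hcase
    -- conclude via condition (b) for σ'
    have hfinal : (fun k => u k + ev i k) ∈ trunc C u := by
      rw [hB σ']
      apply Finset.mem_biUnion.mpr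
      refine ⟨t, htP, cave_mem_stalactite.mpr ⟨S.erase ℓh, ?_, ?_⟩⟩
      · intro ℓ' hℓ'
        refine cave_mem_stalDirs.mpr ⟨?_, jf ℓ' hℓ', hjf1 ℓ' hℓ',
          Finset.mem_filter.mpr ⟨hjf2 ℓ' hℓ', ?_⟩⟩
        · have h5 := htform ℓ'
          rw [if_pos hℓ'] at h5
          omega
        · refine lexLt_mk (hjf1 ℓ' hℓ') ?_ (hedge ℓ' hℓ')
          have h5 := htform ℓ'
          rw [if_pos hℓ'] at h5
          omega
      · funext k
        have h5 := htform k
        by_cases hkK : k ∈ S.erase ℓh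
        · rw [if_pos hkK] at h5 ⊢
          omega
        · rw [if_neg hkK] at h5 ⊢
          omega
    exact (cave_mem_trunc.mp hfinal).1
end

section
/- Let C ⊂ ℕ^p be a cave and u, v ∈ C with supp(u) ∩ supp(v) = ∅ and |u| > 1. Then for any i ∈ supp(v), either u - e_j + e_i ∈ C for some j ∈ supp(u), or u + e_i ∈ C. -/
open Finset

open scoped Classical

/-- Directed exchange lemma: in a base polymatroid, if `x i < y i` then `x` can
receive a unit at `i` by giving one up at some coordinate `j` with `x j > 0`. -/
theorem dir_ex {p : ℕ} (P : Finset (Fin p → ℕ)) (hP : IsBasePolymatroid P) :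
    ∀ (d : ℕ) (x : Fin p → ℕ), x ∈ P → ∀ y ∈ P, ∀ i : Fin p, x i < y i →
      (∑ k, (y k - x k)) ≤ d → ∃ j, 0 < x j ∧ step x j i ∈ P := by
  intro d
  induction d with
  | zero =>
    intro x hx y hy i hlt hsum
    exfalso
    have h1 : y i - x i ≤ ∑ k, (y k - x k) :=
      Finset.single_le_sum (f := fun k => y k - x k)
        (fun _ _ => Nat.zero_le _) (Finset.mem_univ i)
    omega
  | succ d ih =>
    intro x hx y hy i hlt hsum
    by_cases hA : ∃ i₂, i₂ ≠ i ∧ x i₂ < y i₂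
    · obtain ⟨i₂, hi₂ne, hi₂lt⟩ := hA
      obtain ⟨j, hj, hmem⟩ := hP.2 y hy x hx i₂ hi₂lt
      have hji : j ≠ i := by intro h; subst h; omega
      have hji₂ : j ≠ i₂ := by intro h; subst h; omega
      have hyi : step y i₂ j i = y i := by
        simp [step, ev, Ne.symm hi₂ne, Ne.symm hji]
      have hsum' : (∑ k, (step y i₂ j k - x k)) ≤ d := by
        have hstrict : (∑ k, (step y i₂ j k - x k)) < ∑ k, (y k - x k) := by
          apply Finset.sum_lt_sum
          · intro k _
            by_cases h1 : k = i₂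
            · subst h1; simp [step, ev, hji₂.symm]; omega
            · by_cases h2 : k = j
              · subst h2; simp [step, ev, hji₂]; omega
              · simp [step, ev, h1, h2]
          · exact ⟨i₂, Finset.mem_univ _, by simp [step, ev, hji₂.symm]; omega⟩
        omega
      obtain ⟨j', hj', hmem'⟩ := ih x hx _ hmem i (by omega) hsum'
      exact ⟨j', hj', hmem'⟩
    · push_neg at hA
      by_cases h2 : x i + 1 < y i
      · obtain ⟨j, hj, hmem⟩ := hP.2 y hy x hx i hlt
        have hji : j ≠ i := by intro h; subst h; omega
        have hyi : step y i j i = y i - 1 := by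
          simp [step, ev, Ne.symm hji]
        have hsum' : (∑ k, (step y i j k - x k)) ≤ d := by
          have hstrict : (∑ k, (step y i j k - x k)) < ∑ k, (y k - x k) := by
            apply Finset.sum_lt_sum
            · intro k _
              by_cases h1 : k = i
              · subst h1; simp [step, ev, Ne.symm hji]; omega
              · by_cases hkj : k = j
                · subst hkj; simp [step, ev, hji]; omega
                · simp [step, ev, h1, hkj]
            · exact ⟨i, Finset.mem_univ _, by simp [step, ev, Ne.symm hji]; omega⟩
          omega
        obtain ⟨j', hj', hmem'⟩ := ih x hx _ hmem i (by omega) hsum'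
        exact ⟨j', hj', hmem'⟩
      · -- base case: y i = x i + 1 and y ≤ x off i; then y = x - e_{j₀} + e_i
        have hyi : y i = x i + 1 := by omega
        have hdeg : degSum x = degSum y := hP.1 x hx y hy
        have hsum2 : degSum x + ∑ k, (y k - x k) = degSum y + ∑ k, (x k - y k) := by
          rw [degSum, degSum, ← Finset.sum_add_distrib, ← Finset.sum_add_distrib]
          exact Finset.sum_congr rfl (fun k _ => by omega)
        have h3 : ∑ k, (y k - x k) = 1 := by
          rw [Finset.sum_eq_single i (fun k _ hk => by have := hA k hk; omega)
            (fun h => absurd (Finset.mem_univ i) h)]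
          omega
        have key : ∑ k, (x k - y k) = 1 := by omega
        obtain ⟨j₀, -, hj₀⟩ :=
          Finset.exists_ne_zero_of_sum_ne_zero (key ▸ one_ne_zero)
        have hj₀' : x j₀ - y j₀ ≠ 0 := hj₀
        have hj₀i : j₀ ≠ i := by intro h; subst h; omega
        have hone : x j₀ - y j₀ = 1 := by
          have hle1 : x j₀ - y j₀ ≤ ∑ k, (x k - y k) := Finset.single_le_sum
            (f := fun k => x k - y k) (fun _ _ => Nat.zero_le _) (Finset.mem_univ j₀)
          omega
        have hrest : ∀ k, k ≠ j₀ → x k - y k = 0 := by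
          intro k hk
          have hsplit : (x j₀ - y j₀) + ∑ l ∈ Finset.univ.erase j₀, (x l - y l)
              = ∑ l, (x l - y l) :=
            Finset.add_sum_erase Finset.univ (fun l => x l - y l) (Finset.mem_univ j₀)
          have hz : ∑ l ∈ Finset.univ.erase j₀, (x l - y l) = 0 := by omega
          exact Finset.sum_eq_zero_iff.1 hz k (Finset.mem_erase.2 ⟨hk, Finset.mem_univ k⟩)
        refine ⟨j₀, by omega, ?_⟩
        have heq : step x j₀ i = y := by
          funext k
          by_cases h1 : k = i
          · subst h1; simp [step, ev, Ne.symm hj₀i]; omega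
          · by_cases hkj : k = j₀
            · subst hkj
              have := hA k hj₀i
              simp [step, ev, hj₀i]
              omega
            · have hr := hrest k hkj
              have hl := hA k h1
              simp [step, ev, h1, hkj]
              omega
        rw [heq]; exact hy

/-- From the stalactite decomposition, every element of `A` lies below some top
element of `A`. -/
theorem exists_top_ge {p : ℕ} {A : Finset (Fin p → ℕ)} (hb : CaveCondB A)
    {x : Fin p → ℕ} (hx : x ∈ A) : ∃ a ∈ topOf A, ∀ k, x k ≤ a k := by
  have h := hb (Equiv.refl _)
  rw [h, Finset.mem_biUnion] at hx
  obtain ⟨a, ha, hst⟩ := hx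
  rw [stalactite, Finset.mem_image] at hst
  obtain ⟨J, hJ, hEq⟩ := hst
  refine ⟨a, ha, fun k => ?_⟩
  rw [← hEq]
  exact Nat.sub_le _ _

/-- Let `C` be a cave and `u, v ∈ C` with disjoint supports and `|u| > 1`. Then for
any `i ∈ supp(v)`, either `u - e_j + e_i ∈ C` for some `j ∈ supp(u)`, or `u + e_i ∈ C`. -/
theorem cave_exchange_disjoint_support {p : ℕ} (C : Finset (Fin p → ℕ))
    (hC : IsCave C) (u v : Fin p → ℕ) (hu : u ∈ C) (hv : v ∈ C)
    (hdisj : ∀ k, u k = 0 ∨ v k = 0) (hcard : 1 < degSum u)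
    (i : Fin p) (hi : v i ≠ 0) :
    (∃ j : Fin p, u j ≠ 0 ∧ step u j i ∈ C) ∨ (fun k => u k + ev i k) ∈ C := by
  classical
  have htr : trunc C (fun _ => 0) = C := by
    rw [trunc]; exact Finset.filter_true_of_mem (fun a _ k => Nat.zero_le _)
  obtain ⟨htopP, hcondB, -⟩ := hC (fun _ => 0)
  rw [htr] at htopP hcondB
  obtain ⟨a, haT, hau⟩ := exists_top_ge hcondB hu
  obtain ⟨a', ha'T, ha'v⟩ := exists_top_ge hcondB hv
  have hui : u i = 0 := (hdisj i).resolve_right hi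
  have ha'i : 0 < a' i := lt_of_lt_of_le (Nat.pos_of_ne_zero hi) (ha'v i)
  have hsubC : topOf C ⊆ C := Finset.filter_subset _ _
  -- find a witness `w ∈ C` with `w i > 0` sharing support with `u`
  obtain ⟨w, hwC, hwi, m, hum, hwm⟩ :
      ∃ w ∈ C, 0 < w i ∧ ∃ m, 0 < u m ∧ 0 < w m := by
    by_cases hai : 0 < a i
    · obtain ⟨m, -, hm⟩ := Finset.exists_ne_zero_of_sum_ne_zero
        (f := u) (s := Finset.univ) (by rw [← degSum]; omega)
      exact ⟨a, hsubC haT, hai, m, Nat.pos_of_ne_zero hm,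
        lt_of_lt_of_le (Nat.pos_of_ne_zero hm) (hau m)⟩
    · have hai0 : a i = 0 := by omega
      have haui : a i < a' i := by omega
      obtain ⟨j, hja, hstepT⟩ := dir_ex _ htopP _ a haT a' ha'T i haui le_rfl
      have hji : j ≠ i := by intro h; subst h; omega
      set w := step a j i with hw
      have hwi : 0 < w i := by simp [hw, step, ev, Ne.symm hji]
      by_cases hm : ∃ m, m ≠ j ∧ 0 < u m
      · obtain ⟨m, hmj, hmu⟩ := hm
        refine ⟨w, hsubC hstepT, hwi, m, hmu, ?_⟩
        have h1 : w m = a m + ev i m := by simp [hw, step, ev, hmj]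
        have h2 : u m ≤ a m := hau m
        have : 0 < ev i m ∨ (0:ℕ) ≤ ev i m := Or.inr (Nat.zero_le _)
        omega
      · push_neg at hm
        have huj : degSum u = u j := by
          rw [degSum]
          exact Finset.sum_eq_single j (fun b _ hb => by have := hm b hb; omega)
            (fun h => absurd (Finset.mem_univ j) h)
        have hwj : w j = a j - 1 := by simp [hw, step, ev, hji]
        have haj : u j ≤ a j := hau j
        exact ⟨w, hsubC hstepT, hwi, j, by omega, by omega⟩
  -- work in the truncation at `e_m`, which is a generalized polymatroid
  have hbne : ev m ≠ (fun _ => 0 : Fin p → ℕ) := by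
    intro h
    have := congr_fun h m
    simp [ev] at this
  obtain ⟨-, -, hgp'⟩ := hC (ev m)
  have hgp : IsBasePolymatroid (homog (trunc C (ev m))) := hgp' hbne
  set A := trunc C (ev m) with hA
  have hmemA : ∀ c ∈ C, 0 < c m → c ∈ A := by
    intro c hc hcm
    rw [hA, trunc, Finset.mem_filter]
    refine ⟨hc, fun k => ?_⟩
    by_cases h : k = m
    · subst h; simp [ev]; omega
    · simp [ev, h]
  have hAu : u ∈ A := hmemA u hu hum
  have hAw : w ∈ A := hmemA w hwC hwm
  have hAC : A ⊆ C := Finset.filter_subset _ _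
  have hxh : Fin.snoc u (maxDeg A - degSum u) ∈ homog A := by
    rw [homog, Finset.mem_image]; exact ⟨u, hAu, rfl⟩
  have hyh : Fin.snoc w (maxDeg A - degSum w) ∈ homog A := by
    rw [homog, Finset.mem_image]; exact ⟨w, hAw, rfl⟩
  have hlt : (Fin.snoc u (maxDeg A - degSum u) : Fin (p+1) → ℕ) i.castSucc <
      (Fin.snoc w (maxDeg A - degSum w) : Fin (p+1) → ℕ) i.castSucc := by
    rw [Fin.snoc_castSucc, Fin.snoc_castSucc]; omega
  obtain ⟨J, hJpos, hstep⟩ := dir_ex _ hgp _ _ hxh _ hyh i.castSucc hlt le_rfl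
  rw [homog, Finset.mem_image] at hstep
  obtain ⟨c, hcA, hc⟩ := hstep
  rcases Fin.eq_castSucc_or_eq_last J with ⟨j, rfl⟩ | rfl
  · -- c = u - e_j + e_i
    left
    have huj : u j ≠ 0 := by
      rw [Fin.snoc_castSucc] at hJpos; omega
    refine ⟨j, huj, ?_⟩
    have hcj : c = step u j i := by
      funext k
      have h2 := congr_fun hc k.castSucc
      rw [Fin.snoc_castSucc] at h2
      rw [h2, step, step]
      have e1 : ev (Fin.castSucc i) (Fin.castSucc k) = ev i k := by
        simp [ev, Fin.castSucc_inj]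
      have e2 : ev (Fin.castSucc j) (Fin.castSucc k) = ev j k := by
        simp [ev, Fin.castSucc_inj]
      rw [e1, e2, Fin.snoc_castSucc]
    exact hcj ▸ hAC hcA
  · -- c = u + e_i
    right
    have hcj : c = fun k => u k + ev i k := by
      funext k
      have h2 := congr_fun hc k.castSucc
      rw [Fin.snoc_castSucc] at h2
      rw [h2, step]
      have e1 : ev (Fin.castSucc i) (Fin.castSucc k) = ev i k := by
        simp [ev, Fin.castSucc_inj]
      have e2 : ev (Fin.last p) (Fin.castSucc k) = 0 := by
        simp [ev, (Fin.castSucc_lt_last k).ne]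
      rw [e1, e2, Fin.snoc_castSucc, Nat.sub_zero]
    exact hcj ▸ hAC hcA
end

section
/- Let P ⊂ ℕ^p be a base polymatroid all of whose elements have coordinate sum equal to d. To each n = (n_1,...,n_p) ∈ P with n ≤ m = (m_1,...,m_p) associate the facet F_n = ∪_{i=1}^p {x_{i, m_i - n_i}, ..., x_{i, m_i}} on the vertex set {x_{i,j} : 1 ≤ i ≤ p, 0 ≤ j ≤ m_i}. Then the ordering of the facets F_n by the lexicographic order on the vectors n ∈ P is a shelling order of the simplicial complex generated by these facets. -/
open Finset

open scoped Classical

/-- The standard lexicographic order on `ℕ^p`. -/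
def stdLexLt {p : ℕ} (u v : Fin p → ℕ) : Prop :=
  ∃ i : Fin p, u i < v i ∧ ∀ j, j < i → u j = v j

/-- The facet `F_n = ∪_i {x_{i, m_i - n_i}, …, x_{i, m_i}}` associated with `n ≤ m`,
on the vertex set `{x_{i,j} : 1 ≤ i ≤ p, 0 ≤ j ≤ m_i}`. -/
noncomputable def facetOf {p : ℕ} (m : Fin p → ℕ) (n : Fin p → ℕ) :
    Finset (Σ i : Fin p, Fin (m i + 1)) :=
  Finset.univ.filter (fun x => m x.1 - n x.1 ≤ (x.2 : ℕ))

/-- For a base polymatroid `P` with all elements of coordinate sum `d` and `n ≤ m`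
componentwise, the lexicographic order on the points `n ∈ P` induces a shelling order on
the simplicial complex generated by the facets `F_n`: for every `n ∈ P` and `s ∈ P` with
`s ≺ n`, there is `v ∈ P` with `v ≺ n`, `F_s ∩ F_n ⊆ F_v ∩ F_n` and
`|F_v ∩ F_n| = |F_n| - 1`. -/
theorem polymatroid_lex_shelling {p : ℕ} (m : Fin p → ℕ) (d : ℕ)
    (P : Finset (Fin p → ℕ))
    (hP : IsBasePolymatroid P)
    (hhom : ∀ n ∈ P, degSum n = d)
    (hle : ∀ n ∈ P, ∀ i, n i ≤ m i) :
    ∀ n ∈ P, ∀ s ∈ P, stdLexLt s n →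
      ∃ v ∈ P, stdLexLt v n ∧
        facetOf m s ∩ facetOf m n ⊆ facetOf m v ∩ facetOf m n ∧
        (facetOf m v ∩ facetOf m n).card + 1 = (facetOf m n).card := by
  intro n hn s hs hlex
  obtain ⟨i, hsi, hagree⟩ := hlex
  obtain ⟨j, hnj, hvP⟩ := hP.2 n hn s hs i hsi
  set v := step n i j with hv
  have hji : j ≠ i := by intro h; subst h; omega
  have hij : i < j := by
    rcases lt_trichotomy i j with h | h | h
    · exact h
    · exact absurd h.symm hji
    · have := hagree j h; omega
  have hvi : v i = n i - 1 := by simp [hv, step, ev, hji, Ne.symm hji]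
  have hvk : ∀ k : Fin p, k ≠ i → n k ≤ v k := by
    intro k hk
    simp only [hv, step, ev, if_neg hk]
    split <;> omega
  have hni : 1 ≤ n i := by omega
  have hnm : n i ≤ m i := hle n hn i
  refine ⟨v, hvP, ⟨i, by omega, fun k hk => ?_⟩, ?_, ?_⟩
  · have hki : k ≠ i := ne_of_lt hk
    have hkj : k ≠ j := ne_of_lt (hk.trans hij)
    simp [hv, step, ev, hki, hkj]
  · intro x hx
    obtain ⟨k, b⟩ := x
    simp only [facetOf, Finset.mem_inter, Finset.mem_filter, Finset.mem_univ,
      true_and] at hx ⊢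
    obtain ⟨hxs, hxn⟩ := hx
    refine ⟨?_, hxn⟩
    by_cases hki : k = i
    · subst hki
      rw [hvi]
      omega
    · have := hvk k hki
      omega
  · have ha : (⟨i, ⟨m i - n i, by omega⟩⟩ : Σ k : Fin p, Fin (m k + 1)) ∈ facetOf m n := by
      simp [facetOf]
      omega
    have heq : facetOf m v ∩ facetOf m n
        = (facetOf m n).erase ⟨i, ⟨m i - n i, by omega⟩⟩ := by
      ext ⟨k, b⟩
      simp only [facetOf, Finset.mem_inter, Finset.mem_filter, Finset.mem_univ,
        true_and, Finset.mem_erase]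
      have hb : (b : ℕ) ≤ m k := Fin.is_le b
      by_cases hki : k = i
      · subst hki
        have hne : ((⟨k, b⟩ : Σ k : Fin p, Fin (m k + 1))
            = ⟨k, ⟨m k - n k, by omega⟩⟩) ↔ (b : ℕ) = m k - n k := by
          constructor
          · intro h
            exact congrArg Fin.val (eq_of_heq (Sigma.mk.inj_iff.1 h).2)
          · intro h
            congr 1
            exact Fin.ext h
        simp only [Ne, hne, hvi]
        omega
      · have hne : ((⟨k, b⟩ : Σ k : Fin p, Fin (m k + 1))
            ≠ ⟨i, ⟨m i - n i, by omega⟩⟩) := by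
          intro h
          exact hki (congrArg Sigma.fst h)
        simp only [Ne, hne, not_false_iff, true_and]
        have := hvk k hki
        omega
    rw [heq, Finset.card_erase_of_mem ha]
    have : 1 ≤ (facetOf m n).card := Finset.card_pos.2 ⟨_, ha⟩
    omega
end

section
/- Let M be a finite matroid on ground set [p] (viewed as the set of indicator vectors of its independent sets, or equivalently via its independence complex Δ(M)), and suppose M has no coloops. Then the reduced Euler characteristic of the independence complex Δ(M) is nonzero. -/
open Finset

/-- `M` is the independence complex of a matroid on `[p]`: a nonempty, downward closed
family of finite subsets of `[p]` satisfying the exchange (augmentation) axiom. -/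
def IsMatroidComplex {p : ℕ} (M : Finset (Finset (Fin p))) : Prop :=
  M.Nonempty ∧
  (∀ F ∈ M, ∀ G ⊆ F, G ∈ M) ∧
  (∀ F ∈ M, ∀ G ∈ M, F.card < G.card → ∃ x ∈ G \ F, insert x F ∈ M)

/-- A basis: a maximal independent set. -/
def IsBasisOf {p : ℕ} (M : Finset (Finset (Fin p))) (B : Finset (Fin p)) : Prop :=
  B ∈ M ∧ ∀ G ∈ M, B ⊆ G → G = B

/-- A coloop: an element lying in every basis. -/
def IsColoop {p : ℕ} (M : Finset (Finset (Fin p))) (i : Fin p) : Prop :=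
  ∀ B : Finset (Fin p), IsBasisOf M B → i ∈ B

namespace MatroidAux

variable {p : ℕ}

/-- The rank of the complex: max cardinality of a member. -/
def rk (M : Finset (Finset (Fin p))) : ℕ := M.sup Finset.card

/-- The (unreduced, un-negated) Euler sum. -/
def es (M : Finset (Finset (Fin p))) : ℤ := ∑ F ∈ M, (-1 : ℤ) ^ F.card

lemma card_le_rk {M : Finset (Finset (Fin p))} {F : Finset (Fin p)} (hF : F ∈ M) :
    F.card ≤ rk M := Finset.le_sup hF

lemma exists_max {M : Finset (Finset (Fin p))} (hne : M.Nonempty) :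
    ∃ B ∈ M, B.card = rk M := by
  obtain ⟨B, hB, h⟩ := Finset.exists_mem_eq_sup M hne Finset.card
  exact ⟨B, hB, h.symm⟩

lemma extend_aux {M : Finset (Finset (Fin p))} (hM : IsMatroidComplex M) :
    ∀ (d : ℕ) (F : Finset (Fin p)), F ∈ M → rk M ≤ F.card + d →
      ∃ B ∈ M, F ⊆ B ∧ B.card = rk M := by
  intro d
  induction d with
  | zero =>
    intro F hF hle
    exact ⟨F, hF, Finset.Subset.refl F, le_antisymm (card_le_rk hF) (by simpa using hle)⟩
  | succ d ih =>
    intro F hF hle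
    by_cases h : rk M ≤ F.card + d
    · exact ih F hF h
    · have hlt : F.card < rk M := by omega
      obtain ⟨G, hG, hGc⟩ := exists_max hM.1
      obtain ⟨x, hx, hxF⟩ := hM.2.2 F hF G hG (by omega)
      have hxnF : x ∉ F := (Finset.mem_sdiff.1 hx).2
      obtain ⟨B, hB, hsub, hBc⟩ := ih (insert x F) hxF
        (by rw [Finset.card_insert_of_notMem hxnF]; omega)
      exact ⟨B, hB, (Finset.subset_insert x F).trans hsub, hBc⟩

lemma extend_to_max {M : Finset (Finset (Fin p))} (hM : IsMatroidComplex M)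
    {F : Finset (Fin p)} (hF : F ∈ M) : ∃ B ∈ M, F ⊆ B ∧ B.card = rk M :=
  extend_aux hM (rk M) F hF (by omega)

lemma basis_iff {M : Finset (Finset (Fin p))} (hM : IsMatroidComplex M)
    (B : Finset (Fin p)) : IsBasisOf M B ↔ B ∈ M ∧ B.card = rk M := by
  constructor
  · rintro ⟨hB, hmax⟩
    obtain ⟨B', hB', hsub, hc⟩ := extend_to_max hM hB
    have := hmax B' hB' hsub
    subst this
    exact ⟨hB, hc⟩
  · rintro ⟨hB, hc⟩
    refine ⟨hB, fun G hG hsub => ?_⟩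
    exact Finset.eq_of_subset_of_card_le hsub (by rw [hc]; exact card_le_rk hG) |>.symm

lemma not_coloop_iff {M : Finset (Finset (Fin p))} (i : Fin p) :
    ¬ IsColoop M i ↔ ∃ B, IsBasisOf M B ∧ i ∉ B := by
  unfold IsColoop
  push_neg
  rfl

/-- Deletion of `e`. -/
def del (e : Fin p) (M : Finset (Finset (Fin p))) : Finset (Finset (Fin p)) :=
  M.filter (fun F => e ∉ F)

/-- Contraction of `e`. -/
def con (e : Fin p) (M : Finset (Finset (Fin p))) : Finset (Finset (Fin p)) :=
  M.filter (fun F => e ∉ F ∧ insert e F ∈ M)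

lemma mem_del {e : Fin p} {M : Finset (Finset (Fin p))} {F : Finset (Fin p)} :
    F ∈ del e M ↔ F ∈ M ∧ e ∉ F := Finset.mem_filter

lemma mem_con {e : Fin p} {M : Finset (Finset (Fin p))} {F : Finset (Fin p)} :
    F ∈ con e M ↔ F ∈ M ∧ e ∉ F ∧ insert e F ∈ M := Finset.mem_filter

lemma empty_mem {M : Finset (Finset (Fin p))} (hM : IsMatroidComplex M) : ∅ ∈ M := by
  obtain ⟨F, hF⟩ := hM.1
  exact hM.2.1 F hF ∅ (Finset.empty_subset F)

lemma del_isMatroid {M : Finset (Finset (Fin p))} (hM : IsMatroidComplex M) (e : Fin p) :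
    IsMatroidComplex (del e M) := by
  refine ⟨⟨∅, mem_del.2 ⟨empty_mem hM, by simp⟩⟩, ?_, ?_⟩
  · rintro F hF G hG
    rw [mem_del] at hF ⊢
    exact ⟨hM.2.1 F hF.1 G hG, fun h => hF.2 (hG h)⟩
  · rintro F hF G hG hlt
    rw [mem_del] at hF hG
    obtain ⟨x, hx, hxF⟩ := hM.2.2 F hF.1 G hG.1 hlt
    have hxG := (Finset.mem_sdiff.1 hx).1
    refine ⟨x, hx, mem_del.2 ⟨hxF, ?_⟩⟩
    rw [Finset.mem_insert]
    rintro (rfl | h)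
    · exact hG.2 hxG
    · exact hF.2 h

lemma con_isMatroid {M : Finset (Finset (Fin p))} (hM : IsMatroidComplex M) {e : Fin p}
    (he : {e} ∈ M) : IsMatroidComplex (con e M) := by
  refine ⟨⟨∅, mem_con.2 ⟨empty_mem hM, by simp, by simpa using he⟩⟩, ?_, ?_⟩
  · rintro F hF G hG
    rw [mem_con] at hF ⊢
    refine ⟨hM.2.1 F hF.1 G hG, fun h => hF.2.1 (hG h), ?_⟩
    exact hM.2.1 _ hF.2.2 _ (Finset.insert_subset_insert e hG)
  · rintro F hF G hG hlt
    rw [mem_con] at hF hG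
    have hlt' : (insert e F).card < (insert e G).card := by
      rw [Finset.card_insert_of_notMem hF.2.1, Finset.card_insert_of_notMem hG.2.1]
      omega
    obtain ⟨x, hx, hxF⟩ := hM.2.2 _ hF.2.2 _ hG.2.2 hlt'
    rw [Finset.mem_sdiff, Finset.mem_insert] at hx
    have hxe : x ≠ e := by
      intro h
      rw [h] at hx
      exact hx.2 (Finset.mem_insert_self e F)
    have hxG : x ∈ G := hx.1.resolve_left hxe
    have hxnF : x ∉ F := fun h => hx.2 (Finset.mem_insert_of_mem h)
    refine ⟨x, Finset.mem_sdiff.2 ⟨hxG, hxnF⟩, mem_con.2 ⟨?_, ?_, ?_⟩⟩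
    · exact hM.2.1 _ hxF _ (Finset.insert_subset_insert x (Finset.subset_insert e F))
    · rw [Finset.mem_insert]
      rintro (rfl | h)
      · exact hxe rfl
      · exact hF.2.1 h
    · have : insert e (insert x F) = insert x (insert e F) := Finset.insert_comm e x F
      rw [this]
      exact hxF

lemma es_eq (M : Finset (Finset (Fin p))) (hM : IsMatroidComplex M) (e : Fin p) :
    es M = es (del e M) - es (con e M) := by
  classical
  have hsplit : es M = (∑ F ∈ M.filter (fun F => e ∉ F), (-1:ℤ)^F.card)
      + ∑ F ∈ M.filter (fun F => ¬ (e ∉ F)), (-1:ℤ)^F.card :=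
    (Finset.sum_filter_add_sum_filter_not M _ _).symm
  have hbij : ∑ F ∈ M.filter (fun F => ¬ (e ∉ F)), (-1:ℤ)^F.card
      = ∑ F ∈ con e M, (-1:ℤ)^(F.card + 1) := by
    refine Finset.sum_nbij' (fun F => F.erase e) (fun F => insert e F) ?_ ?_ ?_ ?_ ?_
    · intro F hF
      rw [Finset.mem_filter, not_not] at hF
      rw [mem_con]
      refine ⟨hM.2.1 F hF.1 _ (Finset.erase_subset e F), Finset.notMem_erase e F, ?_⟩
      rw [Finset.insert_erase hF.2]
      exact hF.1
    · intro F hF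
      rw [mem_con] at hF
      rw [Finset.mem_filter, not_not]
      exact ⟨hF.2.2, Finset.mem_insert_self e F⟩
    · intro F hF
      rw [Finset.mem_filter, not_not] at hF
      exact Finset.insert_erase hF.2
    · intro F hF
      rw [mem_con] at hF
      exact Finset.erase_insert hF.2.1
    · intro F hF
      rw [Finset.mem_filter, not_not] at hF
      have h1 : 0 < F.card := Finset.card_pos.2 ⟨e, hF.2⟩
      rw [Finset.card_erase_of_mem hF.2]
      congr 1
      omega
  have : ∑ F ∈ con e M, (-1:ℤ)^(F.card + 1) = - es (con e M) := by
    unfold es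
    rw [← Finset.sum_neg_distrib]
    refine Finset.sum_congr rfl fun F _ => ?_
    rw [pow_succ]
    ring
  unfold es del at *
  rw [hsplit, hbij, this]
  ring

lemma coloop_insert {M : Finset (Finset (Fin p))} (hM : IsMatroidComplex M) {e : Fin p}
    (hc : IsColoop M e) {F : Finset (Fin p)} (hF : F ∈ M) : insert e F ∈ M := by
  obtain ⟨B, hB, hsub, hc'⟩ := extend_to_max hM hF
  have hBbasis : IsBasisOf M B := (basis_iff hM B).2 ⟨hB, hc'⟩
  have heB : e ∈ B := hc B hBbasis
  exact hM.2.1 B hB _ (Finset.insert_subset heB hsub)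

lemma del_eq_con_of_coloop {M : Finset (Finset (Fin p))} (hM : IsMatroidComplex M)
    {e : Fin p} (hc : IsColoop M e) : del e M = con e M := by
  ext F
  rw [mem_del, mem_con]
  constructor
  · rintro ⟨hF, he⟩
    exact ⟨hF, he, coloop_insert hM hc hF⟩
  · rintro ⟨hF, he, _⟩
    exact ⟨hF, he⟩

lemma rk_del {M : Finset (Finset (Fin p))} (hM : IsMatroidComplex M) {e : Fin p}
    (hnc : ¬ IsColoop M e) : rk (del e M) = rk M := by
  obtain ⟨B, hB, heB⟩ := (not_coloop_iff e).1 hnc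
  apply le_antisymm
  · exact Finset.sup_le fun F hF => card_le_rk (mem_del.1 hF).1
  · have : B ∈ del e M := mem_del.2 ⟨hB.1, heB⟩
    calc rk M = B.card := (((basis_iff hM B).1 hB).2).symm
    _ ≤ rk (del e M) := card_le_rk this

lemma rk_con {M : Finset (Finset (Fin p))} (hM : IsMatroidComplex M) {e : Fin p}
    (he : {e} ∈ M) : rk (con e M) = rk M - 1 := by
  obtain ⟨B, hB, hsub, hc⟩ := extend_to_max hM he
  have heB : e ∈ B := hsub (Finset.mem_singleton_self e)
  apply le_antisymm
  · apply Finset.sup_le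
    intro F hF
    rw [mem_con] at hF
    have h1 : (insert e F).card ≤ rk M := card_le_rk hF.2.2
    rw [Finset.card_insert_of_notMem hF.2.1] at h1
    omega
  · have hmem : B.erase e ∈ con e M := by
      rw [mem_con]
      refine ⟨hM.2.1 B hB _ (Finset.erase_subset e B), Finset.notMem_erase e B, ?_⟩
      rw [Finset.insert_erase heB]; exact hB
    have := card_le_rk hmem
    rw [Finset.card_erase_of_mem heB, hc] at this
    exact this

lemma not_both_coloop {M : Finset (Finset (Fin p))} (hM : IsMatroidComplex M) {e : Fin p}
    (he : {e} ∈ M) (hnc : ∀ i, ¬ IsColoop M i) :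
    (∀ i, ¬ IsColoop (del e M) i) ∨ (∀ i, ¬ IsColoop (con e M) i) := by
  by_contra h
  push_neg at h
  obtain ⟨⟨f, hf⟩, ⟨g, hg⟩⟩ := h
  have hce : ¬ IsColoop M e := hnc e
  have hdM := del_isMatroid hM e
  have hcM := con_isMatroid hM he
  have hrd := rk_del hM hce
  have hrc := rk_con hM he
  -- (a): every basis of M avoiding e contains f
  have ha : ∀ B, IsBasisOf M B → e ∉ B → f ∈ B := by
    intro B hB heB
    have hBc := ((basis_iff hM B).1 hB).2
    have : IsBasisOf (del e M) B :=
      (basis_iff hdM B).2 ⟨mem_del.2 ⟨hB.1, heB⟩, by rw [hrd, hBc]⟩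
    exact hf B this
  -- (b): every basis of M containing e contains g (with g ≠ e)
  have hb : ∀ B, IsBasisOf M B → e ∈ B → g ∈ B.erase e := by
    intro B hB heB
    have hBc := ((basis_iff hM B).1 hB).2
    have hmem : B.erase e ∈ con e M := by
      rw [mem_con]
      refine ⟨hM.2.1 B hB.1 _ (Finset.erase_subset e B), Finset.notMem_erase e B, ?_⟩
      rw [Finset.insert_erase heB]; exact hB.1
    have : IsBasisOf (con e M) (B.erase e) :=
      (basis_iff hcM _).2 ⟨hmem, by rw [hrc, Finset.card_erase_of_mem heB, hBc]⟩
    exact hg _ this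
  by_cases hfg : f = g
  · -- then f is a coloop of M
    apply hnc f
    intro B hB
    by_cases heB : e ∈ B
    · have := hb B hB heB
      rw [hfg]
      exact Finset.mem_of_mem_erase this
    · exact ha B hB heB
  · obtain ⟨B2, hB2, hgB2⟩ := (not_coloop_iff g).1 (hnc g)
    have heB2 : e ∉ B2 := by
      intro h
      exact hgB2 (Finset.mem_of_mem_erase (hb B2 hB2 h))
    have hfB2 : f ∈ B2 := ha B2 hB2 heB2
    obtain ⟨B1, hB1, hfB1⟩ := (not_coloop_iff f).1 (hnc f)
    have hB2c := ((basis_iff hM B2).1 hB2).2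
    have hB1c := ((basis_iff hM B1).1 hB1).2
    have hmem : B2.erase f ∈ M := hM.2.1 B2 hB2.1 _ (Finset.erase_subset f B2)
    have hlt : (B2.erase f).card < B1.card := by
      rw [Finset.card_erase_of_mem hfB2, hB2c, hB1c]
      have : 1 ≤ rk M := by
        calc 1 = ({e} : Finset (Fin p)).card := (Finset.card_singleton e).symm
        _ ≤ rk M := card_le_rk he
      omega
    obtain ⟨x, hx, hxmem⟩ := hM.2.2 _ hmem B1 hB1.1 hlt
    rw [Finset.mem_sdiff] at hx
    have hxne : x ∉ B2.erase f := hx.2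
    have hB3c : (insert x (B2.erase f)).card = rk M := by
      rw [Finset.card_insert_of_notMem hxne, Finset.card_erase_of_mem hfB2, hB2c]
      have : 1 ≤ rk M := by
        calc 1 = ({e} : Finset (Fin p)).card := (Finset.card_singleton e).symm
        _ ≤ rk M := card_le_rk he
      omega
    have hB3 : IsBasisOf M (insert x (B2.erase f)) := (basis_iff hM _).2 ⟨hxmem, hB3c⟩
    have hxf : x ≠ f := by rintro rfl; exact hfB1 hx.1
    have hfB3 : f ∉ insert x (B2.erase f) := by
      rw [Finset.mem_insert]
      rintro (rfl | h)
      · exact hxf rfl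
      · exact Finset.notMem_erase f B2 h
    have heB3 : e ∈ insert x (B2.erase f) := by
      by_contra h
      exact hfB3 (ha _ hB3 h)
    have hxe : x = e := by
      rw [Finset.mem_insert] at heB3
      rcases heB3 with h | h
      · exact h.symm
      · exact absurd (Finset.mem_of_mem_erase h) heB2
    subst hxe
    have := hb _ hB3 (Finset.mem_insert_self x _)
    rw [Finset.mem_erase, Finset.mem_insert] at this
    rcases this.2 with h | h
    · exact this.1 h
    · exact hgB2 (Finset.mem_of_mem_erase h)

/-- The set of non-loops. -/
def nonloops (M : Finset (Finset (Fin p))) : Finset (Fin p) :=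
  Finset.univ.filter (fun i => {i} ∈ M)

lemma key : ∀ (k : ℕ) (M : Finset (Finset (Fin p))), IsMatroidComplex M →
    (nonloops M).card ≤ k →
    0 ≤ (-1:ℤ)^(rk M) * es M ∧
    ((∀ i, ¬ IsColoop M i) → 0 < (-1:ℤ)^(rk M) * es M) := by
  intro k
  induction k with
  | zero =>
    intro M hM hcard
    have hall : ∀ i : Fin p, {i} ∉ M := by
      intro i hi
      have : i ∈ nonloops M := Finset.mem_filter.2 ⟨Finset.mem_univ i, hi⟩
      have := Finset.card_pos.2 ⟨i, this⟩
      omega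
    have hMe : M = {∅} := by
      ext F
      simp only [Finset.mem_singleton]
      constructor
      · intro hF
        by_contra h
        obtain ⟨i, hi⟩ := Finset.nonempty_iff_ne_empty.2 h
        exact hall i (hM.2.1 F hF {i} (Finset.singleton_subset_iff.2 hi))
      · rintro rfl; exact empty_mem hM
    subst hMe
    have h1 : es ({∅} : Finset (Finset (Fin p))) = 1 := by
      unfold es; simp
    have h2 : rk ({∅} : Finset (Finset (Fin p))) = 0 := by
      unfold rk; simp
    rw [h1, h2]
    norm_num
  | succ k ih =>
    intro M hM hcard
    by_cases hE : ∃ e : Fin p, {e} ∈ M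
    · obtain ⟨e, he⟩ := hE
      have hen : e ∈ nonloops M := Finset.mem_filter.2 ⟨Finset.mem_univ e, he⟩
      have hdM := del_isMatroid hM e
      have hcM := con_isMatroid hM he
      have hsubd : nonloops (del e M) ⊆ (nonloops M).erase e := by
        intro x hx
        rw [nonloops, Finset.mem_filter, mem_del] at hx
        rw [Finset.mem_erase]
        refine ⟨?_, Finset.mem_filter.2 ⟨Finset.mem_univ x, hx.2.1⟩⟩
        rintro rfl
        exact hx.2.2 (Finset.mem_singleton_self x)
      have hsubc : nonloops (con e M) ⊆ (nonloops M).erase e := by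
        intro x hx
        rw [nonloops, Finset.mem_filter, mem_con] at hx
        rw [Finset.mem_erase]
        refine ⟨?_, Finset.mem_filter.2 ⟨Finset.mem_univ x, hx.2.1⟩⟩
        rintro rfl
        exact hx.2.2.1 (Finset.mem_singleton_self x)
      have hek : ((nonloops M).erase e).card ≤ k := by
        rw [Finset.card_erase_of_mem hen]
        omega
      have hdk : (nonloops (del e M)).card ≤ k :=
        le_trans (Finset.card_le_card hsubd) hek
      have hck : (nonloops (con e M)).card ≤ k :=
        le_trans (Finset.card_le_card hsubc) hek
      have ihd := ih (del e M) hdM hdk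
      have ihc := ih (con e M) hcM hck
      have hsum := es_eq M hM e
      by_cases hcol : IsColoop M e
      · have hdc : del e M = con e M := del_eq_con_of_coloop hM hcol
        have hes0 : es M = 0 := by rw [hsum, hdc]; ring
        rw [hes0]
        constructor
        · simp
        · intro hnc; exact absurd hcol (hnc e)
      · have hrd := rk_del hM hcol
        have hrc := rk_con hM he
        have hr1 : 1 ≤ rk M := by
          calc 1 = ({e} : Finset (Fin p)).card := (Finset.card_singleton e).symm
          _ ≤ rk M := card_le_rk he
        obtain ⟨r', hr'⟩ : ∃ r', rk M = r' + 1 := ⟨rk M - 1, by omega⟩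
        have hg : (-1:ℤ)^(rk M) * es M =
            (-1:ℤ)^(rk (del e M)) * es (del e M) + (-1:ℤ)^(rk (con e M)) * es (con e M) := by
          rw [hsum, hrd, hrc, hr']
          have : r' + 1 - 1 = r' := by omega
          rw [this, pow_succ]
          ring
        constructor
        · rw [hg]; exact add_nonneg ihd.1 ihc.1
        · intro hnc
          rw [hg]
          rcases not_both_coloop hM he hnc with h | h
          · have := ihd.2 h
            linarith [ihc.1]
          · have := ihc.2 h
            linarith [ihd.1]
    · push_neg at hE
      -- no nonloops: M = {∅}
      have hMe : M = {∅} := by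
        ext F
        simp only [Finset.mem_singleton]
        constructor
        · intro hF
          by_contra h
          obtain ⟨i, hi⟩ := Finset.nonempty_iff_ne_empty.2 h
          exact hE i (hM.2.1 F hF {i} (Finset.singleton_subset_iff.2 hi))
        · rintro rfl; exact empty_mem hM
      subst hMe
      have h1 : es ({∅} : Finset (Finset (Fin p))) = 1 := by unfold es; simp
      have h2 : rk ({∅} : Finset (Finset (Fin p))) = 0 := by unfold rk; simp
      rw [h1, h2]
      norm_num

end MatroidAux

/-- If a matroid has no coloops, then the reduced Euler characteristic
`χ̃(Δ(M)) = Σ_{F ∈ Δ(M)} (-1)^(|F|-1) = -Σ_{F ∈ Δ(M)} (-1)^|F|` of its independence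
complex is nonzero. -/
theorem matroid_coloopFree_euler_char_ne_zero {p : ℕ} (M : Finset (Finset (Fin p)))
    (hM : IsMatroidComplex M)
    (hcoloop : ∀ i : Fin p, ¬ IsColoop M i) :
    -(∑ F ∈ M, (-1 : ℤ) ^ F.card) ≠ 0 := by
  have h := (MatroidAux.key (MatroidAux.nonloops M).card M hM le_rfl).2 hcoloop
  intro h0
  have h0' : MatroidAux.es M = 0 := by unfold MatroidAux.es; linarith
  rw [h0'] at h
  simp at h
end

section
/- Let M be a matroid on [p], and let Γ be the face poset of the independence complex of M together with a maximum element 1̂ adjoined. Let μ_Γ be the Möbius function of Γ. If the set of coloops of M is 𝔄, then the set {F independent in M : μ_Γ(F, 1̂) ≠ 0} equals the set of independent sets of M containing 𝔄, i.e., the sets of the form J ∪ 𝔄 where J is independent in the contraction M/𝔄. In particular, as a set of indicator vectors in {0,1}^p, the Möbius support is the translate of the independence complex of M/𝔄 by the indicator vector of 𝔄. -/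
open Finset

open scoped Classical

/-!
Every interval `[F, G]` of faces is Boolean, so `μ_Γ(F, G) = (-1)^|G \ F|` and
`μ_Γ(F, 1̂) = -∑_{J ∈ M/F} (-1)^|J|`. This alternating count `s` satisfies deletion–contraction,
`s(M) = s(M \ e) - s(M / e)`. If `i` is a coloop then `M / i = M \ i`, so `s(M) = 0`; if `M` is
coloop-free of rank `r` and `e` is not a loop, then `M / e` is coloop-free of rank `r - 1` and
`M \ e` has rank `r`, so induction gives `(-1)^r s(M) > 0`. It remains to note that the coloops
of `M / F` are exactly the coloops of `M` outside `F`.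
-/

theorem sum_Icc_neg_one_pow_card_sdiff {α : Type*} [DecidableEq α] {F G : Finset α}
    (h : F ⊂ G) : ∑ H ∈ Icc F G, (-1 : ℤ) ^ #(H \ F) = 0 := by
  have hdisj : ∀ S ∈ (G \ F).powerset, (F ∪ S) \ F = S := fun S hS => by
    rw [union_sdiff_left,
      (disjoint_of_subset_left (mem_powerset.1 hS) sdiff_disjoint).sdiff_eq_left]
  have hinj : Set.InjOn (F ∪ ·) ((G \ F).powerset : Set (Finset α)) := fun S hS T hT hST => by
    rw [← hdisj S hS, ← hdisj T hT]
    exact congrArg (· \ F) hST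
  rw [Icc_eq_image_powerset h.subset, sum_image hinj,
    sum_congr rfl fun S hS => by rw [hdisj S hS],
    sum_powerset_neg_one_pow_card_of_nonempty (sdiff_nonempty.2 h.not_subset)]

theorem moebius_eq_neg_one_pow_card_sdiff {α : Type*} [DecidableEq α] {M : Finset (Finset α)}
    (hdown : ∀ G ∈ M, ∀ H ⊆ G, H ∈ M) {μ : Finset α → Finset α → ℤ} {F : Finset α}
    (hrefl : μ F F = 1)
    (hrec : ∀ G ∈ M, F ⊆ G → F ≠ G →
      ∑ H ∈ M.filter (fun H => F ⊆ H ∧ H ⊆ G), μ F H = 0)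
    {G : Finset α} (hG : G ∈ M) (hFG : F ⊆ G) : μ F G = (-1) ^ #(G \ F) := by
  induction G using Finset.strongInduction with
  | H G ih =>
  obtain rfl | hne := eq_or_ne F G
  · simp [hrefl]
  have hIcc : M.filter (fun H => F ⊆ H ∧ H ⊆ G) = Icc F G := by
    ext H
    simp only [mem_filter, mem_Icc]
    exact ⟨fun h => h.2, fun h => ⟨hdown G hG H h.2, h⟩⟩
  have hμ := hrec G hG hFG hne
  have hsign := sum_Icc_neg_one_pow_card_sdiff (ssubset_of_subset_of_ne hFG hne)
  rw [hIcc, ← Ico_insert_right hFG, sum_insert right_notMem_Ico] at hμ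
  rw [← Ico_insert_right hFG, sum_insert right_notMem_Ico] at hsign
  have hIco : ∑ H ∈ Ico F G, μ F H = ∑ H ∈ Ico F G, (-1) ^ #(H \ F) :=
    sum_congr rfl fun H hH => (mem_Ico.1 hH).elim fun hFH hHG =>
      ih H hHG (hdown G hG H hHG.le) hFH
  linarith

section MatroidComplex

variable {p : ℕ} {M : Finset (Finset (Fin p))} {B F G H : Finset (Fin p)} {e i : Fin p}

def contraction (M : Finset (Finset (Fin p))) (F : Finset (Fin p)) : Finset (Finset (Fin p)) :=
  (M.filter (F ⊆ ·)).image (· \ F)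

def deletion (M : Finset (Finset (Fin p))) (e : Fin p) : Finset (Finset (Fin p)) :=
  M.filter (e ∉ ·)

/-- `-eulerSum M` is the reduced Euler characteristic of the simplicial complex `M`. -/
def eulerSum (M : Finset (Finset (Fin p))) : ℤ :=
  ∑ H ∈ M, (-1) ^ #H

theorem mem_contraction {J : Finset (Fin p)} :
    J ∈ contraction M F ↔ Disjoint J F ∧ J ∪ F ∈ M := by
  simp only [contraction, mem_image, mem_filter]
  constructor
  · rintro ⟨H, ⟨hH, hFH⟩, rfl⟩
    exact ⟨sdiff_disjoint, by rwa [sdiff_union_of_subset hFH]⟩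
  · rintro ⟨hJF, hJ⟩
    exact ⟨J ∪ F, ⟨hJ, subset_union_right⟩, by rw [union_sdiff_right, hJF.sdiff_eq_left]⟩

theorem sum_contraction {β : Type*} [AddCommMonoid β] (M : Finset (Finset (Fin p)))
    (F : Finset (Fin p)) (f : Finset (Fin p) → β) :
    ∑ J ∈ contraction M F, f J = ∑ H ∈ M.filter (F ⊆ ·), f (H \ F) :=
  sum_image fun G hG H hH hGH => by
    rw [← sdiff_union_of_subset (mem_filter.1 hG).2,
      ← sdiff_union_of_subset (mem_filter.1 hH).2]
    exact congrArg (· ∪ F) hGH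

theorem eulerSum_eq_eulerSum_deletion_sub_eulerSum_contraction (M : Finset (Finset (Fin p)))
    (e : Fin p) : eulerSum M = eulerSum (deletion M e) - eulerSum (contraction M {e}) := by
  have hcon : eulerSum (contraction M {e}) = -∑ H ∈ M.filter (e ∈ ·), (-1 : ℤ) ^ #H := by
    simp only [eulerSum, sum_contraction, singleton_subset_iff, sdiff_singleton_eq_erase,
      ← sum_neg_distrib]
    refine sum_congr rfl fun H hH => ?_
    rw [← card_erase_add_one (mem_filter.1 hH).2, pow_succ]
    ring
  rw [hcon, eulerSum, eulerSum, deletion, sub_neg_eq_add, add_comm, sum_filter_add_sum_filter_not]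

theorem IsBasisOf.mem_of_insert_mem (hB : IsBasisOf M B) (h : insert i B ∈ M) : i ∈ B :=
  hB.2 _ h (subset_insert i B) ▸ mem_insert_self i B

theorem exists_isBasisOf_superset (hF : F ∈ M) : ∃ B, F ⊆ B ∧ IsBasisOf M B := by
  obtain ⟨B, hB, hmax⟩ :=
    (M.filter (F ⊆ ·)).exists_max_image card ⟨F, mem_filter.2 ⟨hF, rfl.subset⟩⟩
  rw [mem_filter] at hB
  refine ⟨B, hB.2, hB.1, fun G hG hBG => ?_⟩
  exact (eq_of_subset_of_card_le hBG (hmax G (mem_filter.2 ⟨hG, hB.2.trans hBG⟩))).symm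

theorem isColoop_of_forall_insert_mem (h : ∀ H ∈ M, insert i H ∈ M) : IsColoop M i :=
  fun B hB => hB.mem_of_insert_mem (h B hB.1)

theorem isBasisOf_contraction (hB : IsBasisOf M B) (hFB : F ⊆ B) :
    IsBasisOf (contraction M F) (B \ F) := by
  refine ⟨mem_contraction.2 ⟨sdiff_disjoint, by rw [sdiff_union_of_subset hFB]; exact hB.1⟩,
    fun J hJ hBJ => ?_⟩
  obtain ⟨hJF, hJ⟩ := mem_contraction.1 hJ
  have hJFB : J ∪ F = B := hB.2 _ hJ <| by
    simpa [sdiff_union_of_subset hFB] using union_subset_union_left (t := F) hBJ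
  rw [← hJFB, union_sdiff_right, hJF.sdiff_eq_left]

theorem isBasisOf_deletion (hB : IsBasisOf M B) (he : e ∉ B) : IsBasisOf (deletion M e) B :=
  ⟨mem_filter.2 ⟨hB.1, he⟩, fun G hG => hB.2 G (mem_filter.1 hG).1⟩

namespace IsMatroidComplex

theorem empty_mem (hM : IsMatroidComplex M) : ∅ ∈ M :=
  hM.1.elim fun H hH => hM.2.1 H hH ∅ (empty_subset H)

theorem card_le_of_isBasisOf (hM : IsMatroidComplex M) (hG : G ∈ M) (hB : IsBasisOf M B) :
    #G ≤ #B := by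
  by_contra! h
  obtain ⟨x, hx, hxB⟩ := hM.2.2 B hB.1 G hG h
  exact (mem_sdiff.1 hx).2 (hB.mem_of_insert_mem hxB)

theorem card_eq_of_isBasisOf (hM : IsMatroidComplex M) (hB : IsBasisOf M B)
    (hG : IsBasisOf M G) : #B = #G :=
  (hM.card_le_of_isBasisOf hB.1 hG).antisymm (hM.card_le_of_isBasisOf hG.1 hB)

theorem isBasisOf_of_card_le (hM : IsMatroidComplex M) (hG : G ∈ M) (hB : IsBasisOf M B)
    (h : #B ≤ #G) : IsBasisOf M G :=
  ⟨hG, fun _ hH hGH =>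
    (eq_of_subset_of_card_le hGH ((hM.card_le_of_isBasisOf hH hB).trans h)).symm⟩

theorem exists_isBasisOf_between (hM : IsMatroidComplex M) (hF : F ∈ M) (hB : IsBasisOf M B) :
    ∃ B', IsBasisOf M B' ∧ F ⊆ B' ∧ B' ⊆ F ∪ B := by
  obtain ⟨B', hB', hmax⟩ := (M.filter fun G => F ⊆ G ∧ G ⊆ F ∪ B).exists_max_image card
    ⟨F, mem_filter.2 ⟨hF, rfl.subset, subset_union_left⟩⟩
  obtain ⟨hB'M, hFB', hB'FB⟩ := mem_filter.1 hB'
  refine ⟨B', hM.isBasisOf_of_card_le hB'M hB (not_lt.1 fun h => ?_), hFB', hB'FB⟩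
  obtain ⟨x, hx, hxB'⟩ := hM.2.2 B' hB'M B hB.1 h
  have hle := hmax _ (mem_filter.2 ⟨hxB', hFB'.trans (subset_insert x B'),
    insert_subset (mem_union_right F (mem_sdiff.1 hx).1) hB'FB⟩)
  rw [card_insert_of_notMem (mem_sdiff.1 hx).2] at hle
  omega

theorem insert_mem_of_isColoop (hM : IsMatroidComplex M) (hi : IsColoop M i) (hH : H ∈ M) :
    insert i H ∈ M := by
  obtain ⟨B, hHB, hB⟩ := exists_isBasisOf_superset hH
  exact hM.2.1 B hB.1 _ (insert_subset (hi B hB) hHB)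

protected theorem contraction (hM : IsMatroidComplex M) (hF : F ∈ M) :
    IsMatroidComplex (contraction M F) := by
  refine ⟨⟨∅, mem_contraction.2 ⟨disjoint_empty_left F, by rwa [empty_union]⟩⟩,
    fun J hJ K hKJ => ?_, fun J hJ K hK hJK => ?_⟩
  · obtain ⟨hJF, hJ⟩ := mem_contraction.1 hJ
    exact mem_contraction.2 ⟨hJF.mono_left hKJ, hM.2.1 _ hJ _ (union_subset_union_left hKJ)⟩
  · obtain ⟨hJF, hJ⟩ := mem_contraction.1 hJ
    obtain ⟨hKF, hK⟩ := mem_contraction.1 hK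
    obtain ⟨x, hx, hxJ⟩ := hM.2.2 _ hJ _ hK (by
      rw [card_union_of_disjoint hJF, card_union_of_disjoint hKF]; omega)
    simp only [mem_sdiff, mem_union, not_or] at hx
    have hxK : x ∈ K := hx.1.resolve_right hx.2.2
    refine ⟨x, mem_sdiff.2 ⟨hxK, hx.2.1⟩, mem_contraction.2 ⟨?_, by rwa [insert_union]⟩⟩
    exact disjoint_insert_left.2 ⟨hx.2.2, hJF⟩

protected theorem deletion (hM : IsMatroidComplex M) (e : Fin p) :
    IsMatroidComplex (deletion M e) := by
  refine ⟨⟨∅, mem_filter.2 ⟨hM.empty_mem, notMem_empty e⟩⟩, fun J hJ K hKJ => ?_,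
    fun J hJ K hK hJK => ?_⟩
  · obtain ⟨hJ, heJ⟩ := mem_filter.1 hJ
    exact mem_filter.2 ⟨hM.2.1 J hJ K hKJ, fun heK => heJ (hKJ heK)⟩
  · obtain ⟨hJ, heJ⟩ := mem_filter.1 hJ
    obtain ⟨hK, heK⟩ := mem_filter.1 hK
    obtain ⟨x, hx, hxJ⟩ := hM.2.2 J hJ K hK hJK
    refine ⟨x, hx, mem_filter.2 ⟨hxJ, ?_⟩⟩
    rw [mem_insert, not_or]
    exact ⟨fun hex => heK (hex ▸ (mem_sdiff.1 hx).1), heJ⟩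

theorem contraction_singleton_subset_deletion (hM : IsMatroidComplex M) (e : Fin p) :
    contraction M {e} ⊆ deletion M e := fun J hJ => by
  obtain ⟨hJe, hJ⟩ := mem_contraction.1 hJ
  exact mem_filter.2 ⟨hM.2.1 _ hJ J subset_union_left, disjoint_singleton_right.1 hJe⟩

theorem contraction_singleton_eq_deletion_of_isColoop (hM : IsMatroidComplex M)
    (hi : IsColoop M i) : contraction M {i} = deletion M i := by
  refine (hM.contraction_singleton_subset_deletion i).antisymm fun J hJ => ?_
  obtain ⟨hJ, hiJ⟩ := mem_filter.1 hJ
  rw [mem_contraction, disjoint_singleton_right, union_singleton]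
  exact ⟨hiJ, hM.insert_mem_of_isColoop hi hJ⟩

theorem eulerSum_eq_zero_of_isColoop (hM : IsMatroidComplex M) (hi : IsColoop M i) :
    eulerSum M = 0 := by
  rw [eulerSum_eq_eulerSum_deletion_sub_eulerSum_contraction M i,
    hM.contraction_singleton_eq_deletion_of_isColoop hi, sub_self]

theorem isColoop_contraction_iff (hM : IsMatroidComplex M) (hF : F ∈ M) :
    IsColoop (contraction M F) i ↔ IsColoop M i ∧ i ∉ F := by
  refine ⟨fun hi => ⟨fun B hB => ?_, ?_⟩, fun ⟨hi, hiF⟩ => ?_⟩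
  · obtain ⟨B', hB', hFB', hB'FB⟩ := hM.exists_isBasisOf_between hF hB
    obtain ⟨hiB', hiF⟩ := mem_sdiff.1 (hi _ (isBasisOf_contraction hB' hFB'))
    exact (mem_union.1 (hB'FB hiB')).resolve_left hiF
  · obtain ⟨J, -, hJ⟩ := exists_isBasisOf_superset (hM.contraction hF).empty_mem
    exact disjoint_left.1 (mem_contraction.1 hJ.1).1 (hi J hJ)
  · refine isColoop_of_forall_insert_mem fun J hJ => ?_
    obtain ⟨hJF, hJ⟩ := mem_contraction.1 hJ
    rw [mem_contraction, disjoint_insert_left, insert_union]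
    exact ⟨⟨hiF, hJF⟩, hM.insert_mem_of_isColoop hi hJ⟩

theorem neg_one_pow_card_mul_eulerSum_pos (hM : IsMatroidComplex M)
    (hfree : ∀ i, ¬IsColoop M i) (hB : IsBasisOf M B) : 0 < (-1) ^ #B * eulerSum M := by
  induction M using Finset.strongInduction generalizing B with
  | H M ih =>
  by_cases hloop : ∀ e, {e} ∉ M
  · have hM0 : M = {∅} := eq_singleton_iff_unique_mem.2 ⟨hM.empty_mem, fun H hH =>
      eq_empty_of_forall_notMem fun x hx => hloop x (hM.2.1 H hH _ (singleton_subset_iff.2 hx))⟩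
    subst hM0
    rw [mem_singleton.1 hB.1]
    simp [eulerSum]
  obtain ⟨e, he⟩ := not_forall_not.1 hloop
  obtain ⟨B₀, hB₀, heB₀⟩ : ∃ B₀, IsBasisOf M B₀ ∧ e ∉ B₀ := by
    simpa [IsColoop] using hfree e
  obtain ⟨B₁, heB₁, hB₁⟩ := exists_isBasisOf_superset he
  have hDM : deletion M e ⊂ M := filter_ssubset.2 ⟨{e}, he, by simp⟩
  have hC : 0 < (-1) ^ #(B₁ \ {e}) * eulerSum (contraction M {e}) :=
    ih _ ((hM.contraction_singleton_subset_deletion e).trans_ssubset hDM) (hM.contraction he)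
      (fun i hi => hfree i ((hM.isColoop_contraction_iff he).1 hi).1)
      (isBasisOf_contraction hB₁ heB₁)
  have hD : 0 ≤ (-1) ^ #B₀ * eulerSum (deletion M e) := by
    by_cases hcol : ∃ i, IsColoop (deletion M e) i
    · obtain ⟨i, hi⟩ := hcol
      rw [(hM.deletion e).eulerSum_eq_zero_of_isColoop hi, mul_zero]
    · exact (ih _ hDM (hM.deletion e) (not_exists.1 hcol) (isBasisOf_deletion hB₀ heB₀)).le
  have hrank : #(B₁ \ {e}) + 1 = #B := by
    rw [sdiff_singleton_eq_erase, card_erase_add_one (singleton_subset_iff.1 heB₁),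
      hM.card_eq_of_isBasisOf hB₁ hB]
  rw [hM.card_eq_of_isBasisOf hB₀ hB, ← hrank] at hD
  rw [eulerSum_eq_eulerSum_deletion_sub_eulerSum_contraction M e, ← hrank]
  linear_combination hD + hC

theorem eulerSum_eq_zero_iff (hM : IsMatroidComplex M) :
    eulerSum M = 0 ↔ ∃ i, IsColoop M i := by
  refine ⟨fun h => ?_, fun ⟨i, hi⟩ => hM.eulerSum_eq_zero_of_isColoop hi⟩
  by_contra! hfree
  obtain ⟨B, -, hB⟩ := exists_isBasisOf_superset hM.empty_mem
  simpa [h] using hM.neg_one_pow_card_mul_eulerSum_pos hfree hB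

end IsMatroidComplex

end MatroidComplex

theorem matroid_moebius_support_eq_contraction_general {p : ℕ} (M : Finset (Finset (Fin p)))
    (hM : IsMatroidComplex M)
    (μ₂ : Finset (Fin p) → Finset (Fin p) → ℤ) (μtop : Finset (Fin p) → ℤ)
    (hrefl : ∀ F ∈ M, μ₂ F F = 1)
    (hrec : ∀ F ∈ M, ∀ G ∈ M, F ⊆ G → F ≠ G →
      (∑ H ∈ M.filter (fun H => F ⊆ H ∧ H ⊆ G), μ₂ F H) = 0)
    (hrectop : ∀ F ∈ M, (∑ H ∈ M.filter (fun H => F ⊆ H), μ₂ F H) + μtop F = 0) :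
    ∀ F ∈ M, (μtop F ≠ 0 ↔ ∀ i : Fin p, IsColoop M i → i ∈ F) := by
  intro F hF
  have hμ : ∑ H ∈ M.filter (fun H => F ⊆ H), μ₂ F H = eulerSum (contraction M F) := by
    rw [eulerSum, sum_contraction]
    exact sum_congr rfl fun H hH =>
      moebius_eq_neg_one_pow_card_sdiff hM.2.1 (hrefl F hF) (hrec F hF) (mem_filter.1 hH).1
        (mem_filter.1 hH).2
  have htop : μtop F = -eulerSum (contraction M F) := by linarith [hrectop F hF]
  rw [htop, neg_ne_zero, Ne, (hM.contraction hF).eulerSum_eq_zero_iff]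
  simp only [hM.isColoop_contraction_iff hF, not_exists, not_and, not_not]

/-- Let `Γ` be the face poset of the independence complex of a matroid `M`, with a maximum
`1̂` adjoined, and let `μ` be its Möbius function (encoded by `μ₂ F G = μ_Γ(F, G)` for faces
and `μtop F = μ_Γ(F, 1̂)`, via the defining recurrences). If `𝔄` is the set of coloops of
`M`, then `μ_Γ(F, 1̂) ≠ 0` exactly for the independent sets `F` containing `𝔄`, i.e. the
sets `J ∪ 𝔄` with `J` independent in the contraction `M/𝔄`. -/
theorem matroid_moebius_support_eq_contraction {p : ℕ} (M : Finset (Finset (Fin p)))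
    (hM : IsMatroidComplex M)
    (μ₂ : Finset (Fin p) → Finset (Fin p) → ℤ) (μtop : Finset (Fin p) → ℤ)
    (hrefl : ∀ F ∈ M, μ₂ F F = 1)
    (hzero : ∀ F ∈ M, ∀ G ∈ M, ¬ F ⊆ G → μ₂ F G = 0)
    (hrec : ∀ F ∈ M, ∀ G ∈ M, F ⊆ G → F ≠ G →
      (∑ H ∈ M.filter (fun H => F ⊆ H ∧ H ⊆ G), μ₂ F H) = 0)
    (hrectop : ∀ F ∈ M, (∑ H ∈ M.filter (fun H => F ⊆ H), μ₂ F H) + μtop F = 0) :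
    ∀ F ∈ M, (μtop F ≠ 0 ↔ ∀ i : Fin p, IsColoop M i → i ∈ F) :=
  matroid_moebius_support_eq_contraction_general M hM μ₂ μtop hrefl hrec hrectop
end

section
/- Let S be a standard ℕ^p-graded polynomial ring over a field and J ⊂ S a square-free monomial ideal whose Stanley–Reisner complex Δ(J) is shellable with shelling order corresponding to minimal primes 𝔭_1,...,𝔭_k (all of the same codimension c). Then for each 2 ≤ j ≤ k, the ideal (𝔭_1 ∩ ... ∩ 𝔭_{j-1}) + 𝔭_j is a finite intersection of ideals of the form (𝔭_j, x) where x ranges over a set of distinct variables contained in (𝔭_1 + ... + 𝔭_{j-1}) but not in 𝔭_j. -/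
open MvPolynomial

open scoped Classical

/-- The facet of the Stanley–Reisner complex corresponding to the monomial prime
generated by the variable set `V`: the complement of `V` in the variable set. -/
noncomputable def srFacet {p : ℕ} {m : Fin p → ℕ}
    (V : Finset (Σ i : Fin p, Fin (m i + 1))) : Finset (Σ i : Fin p, Fin (m i + 1)) :=
  Finset.univ \ V

/-!
Ideals generated by variables distribute over each other, so
`(𝔭_1 ∩ ⋯ ∩ 𝔭_{j-1}) + 𝔭_j = ⋂_{l<j} (𝔭_l + 𝔭_j)`. By shellability every `𝔭_l + 𝔭_j` contains
some `𝔭_{l'} + 𝔭_j` with `l' < j` that is `𝔭_j` plus a single variable, so only these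
ideals `(𝔭_j, x)` are needed in the intersection.
-/

namespace MvPolynomial

variable {σ ι R : Type*} [CommSemiring R]

theorem monomial_mem_span_X_image {d : σ →₀ ℕ} {S : Set σ} (h : ∃ x ∈ S, d x ≠ 0) (c : R) :
    monomial d c ∈ Ideal.span (X '' S : Set (MvPolynomial σ R)) := by
  rw [mem_ideal_span_X_image]
  intro e he
  rwa [Finset.mem_singleton.mp (support_monomial_subset he)]

/-- Sort the monomials of `f` by whether they involve a variable of `B`. -/
theorem iInf_span_X_image_sup_span_X_image (A : ι → Set σ) (B : Set σ) (s : Set ι) :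
    (⨅ i ∈ s, Ideal.span (X '' A i : Set (MvPolynomial σ R))) ⊔ Ideal.span (X '' B) =
      ⨅ i ∈ s, Ideal.span (X '' (A i ∪ B)) := by
  refine le_antisymm (sup_le ?_ ?_) fun f hf => ?_
  · exact iInf₂_mono fun i _ => Ideal.span_mono (Set.image_mono Set.subset_union_left)
  · exact le_iInf₂ fun i _ => Ideal.span_mono (Set.image_mono Set.subset_union_right)
  simp only [Submodule.mem_iInf, mem_ideal_span_X_image] at hf
  rw [f.as_sum]
  refine Ideal.sum_mem _ fun d hd => ?_
  by_cases hB : ∃ x ∈ B, d x ≠ 0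
  · exact Ideal.mem_sup_right (monomial_mem_span_X_image hB _)
  refine Ideal.mem_sup_left ?_
  simp only [Submodule.mem_iInf]
  intro i hi
  obtain ⟨x, hx, hdx⟩ := hf i hi d hd
  exact monomial_mem_span_X_image ⟨x, hx.resolve_right fun hxB => hB ⟨x, hxB, hdx⟩, hdx⟩ _

end MvPolynomial

theorem monomialPrime_mono {p : ℕ} {m : Fin p → ℕ} (K : Type*) [Field K]
    {A B : Finset (Σ i : Fin p, Fin (m i + 1))} (h : A ⊆ B) :
    monomialPrime K A ≤ monomialPrime K B :=
  Ideal.span_mono (Set.image_mono (Finset.coe_subset.mpr h))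

theorem monomialPrime_sup_span_X {p : ℕ} {m : Fin p → ℕ} (K : Type*) [Field K]
    (V : Finset (Σ i : Fin p, Fin (m i + 1))) (x : Σ i : Fin p, Fin (m i + 1)) :
    monomialPrime K V ⊔ Ideal.span {MvPolynomial.X x} = monomialPrime K (insert x V) := by
  rw [monomialPrime, monomialPrime, Finset.coe_insert, Set.image_insert_eq, Ideal.span_insert,
    sup_comm]

namespace Finset

variable {α : Type*} [Fintype α] [DecidableEq α]

theorem compl_inter_compl_subset_compl_inter_compl_iff {A B C : Finset α} :
    Aᶜ ∩ Bᶜ ⊆ Cᶜ ∩ Bᶜ ↔ C ∪ B ⊆ A ∪ B := by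
  rw [← compl_union, ← compl_union, compl_subset_compl]

theorem exists_union_eq_insert_of_card_compl_inter_compl {B C : Finset α}
    (h : #(Cᶜ ∩ Bᶜ) + 1 = #Bᶜ) : ∃ x ∉ B, C ∪ B = insert x B := by
  rw [← compl_union, card_compl, card_compl] at h
  have hB : #B ≤ #(C ∪ B) := card_le_card subset_union_right
  have hCB : #(C ∪ B) ≤ Fintype.card α := card_le_univ _
  obtain ⟨x, hx, hins⟩ := exists_eq_insert_iff.mpr ⟨(subset_union_right : B ⊆ C ∪ B), by omega⟩
  exact ⟨x, hx, hins.symm⟩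

end Finset

theorem srFacet_eq_compl {p : ℕ} {m : Fin p → ℕ} (V : Finset (Σ i : Fin p, Fin (m i + 1))) :
    srFacet V = Vᶜ :=
  (Finset.compl_eq_univ_sdiff V).symm

theorem shelling_intersection_structure_general {p q : ℕ} {m : Fin p → ℕ} (K : Type*) [Field K]
    (V : Fin q → Finset (Σ i : Fin p, Fin (m i + 1)))
    (hshell : ∀ j s : Fin q, s < j →
      ∃ l : Fin q, l < j ∧
        srFacet (V s) ∩ srFacet (V j) ⊆ srFacet (V l) ∩ srFacet (V j) ∧
        (srFacet (V l) ∩ srFacet (V j)).card + 1 = (srFacet (V j)).card)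
    (j : Fin q) :
    ∃ W : Finset (Σ i : Fin p, Fin (m i + 1)),
      (∀ x ∈ W, x ∉ V j ∧ ∃ l : Fin q, l < j ∧ x ∈ V l) ∧
      ((⨅ l : Fin q, ⨅ _ : l < j, monomialPrime K (V l)) ⊔ monomialPrime K (V j)) =
        ⨅ x ∈ W, (monomialPrime K (V j) ⊔ Ideal.span {MvPolynomial.X x}) := by
  set W : Finset (Σ i : Fin p, Fin (m i + 1)) :=
    {x | x ∉ V j ∧ ∃ l < j, V l ∪ V j = insert x (V j)}
  have hcovered : ∀ l < j, ∃ x ∈ W, insert x (V j) ⊆ V l ∪ V j := by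
    intro l hl
    obtain ⟨l', hl', hsub, hcard⟩ := hshell j l hl
    simp only [srFacet_eq_compl] at hsub hcard
    obtain ⟨x, hx, hins⟩ := Finset.exists_union_eq_insert_of_card_compl_inter_compl hcard
    refine ⟨x, Finset.mem_filter.mpr ⟨Finset.mem_univ x, hx, l', hl', hins⟩, ?_⟩
    exact hins ▸ Finset.compl_inter_compl_subset_compl_inter_compl_iff.mp hsub
  refine ⟨W, fun x hx => ?_, ?_⟩
  · obtain ⟨-, hxj, l, hl, hins⟩ := Finset.mem_filter.mp hx
    exact ⟨hxj, l, hl, (Finset.mem_union.mp (hins ▸ Finset.mem_insert_self x _)).resolve_right hxj⟩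
  calc _ = ⨅ l ∈ {l | l < j}, monomialPrime K (V l ∪ V j) := by
        simp only [monomialPrime, Finset.coe_union]
        exact MvPolynomial.iInf_span_X_image_sup_span_X_image _ _ _
    _ = _ := by
      simp only [monomialPrime_sup_span_X]
      refine le_antisymm (le_iInf₂ fun x hx => ?_) (le_iInf₂ fun l hl => ?_)
      · obtain ⟨-, -, l, hl, hins⟩ := Finset.mem_filter.mp hx
        exact hins ▸ iInf₂_le l hl
      · obtain ⟨x, hx, hsub⟩ := hcovered l hl
        exact (iInf₂_le x hx).trans (monomialPrime_mono K hsub)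

/-- **Structure of the shelling intersections.** Let `J = 𝔭_1 ∩ ⋯ ∩ 𝔭_q` be a square-free
monomial ideal (primes of common codimension `c`, pairwise incomparable) whose
Stanley–Reisner complex is shellable with shelling order `F_1, …, F_q` (stated via the
standard combinatorial form of shellability). Then for each `j ≥ 2`, the ideal
`(𝔭_1 ∩ ⋯ ∩ 𝔭_{j-1}) + 𝔭_j` is a finite intersection of ideals `(𝔭_j, x)` where `x`
ranges over a set of distinct variables lying in `𝔭_1 + ⋯ + 𝔭_{j-1}` but not in `𝔭_j`. -/
theorem shelling_intersection_structure {p q : ℕ} {m : Fin p → ℕ} (K : Type*) [Field K]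
    (V : Fin q → Finset (Σ i : Fin p, Fin (m i + 1)))
    (c : ℕ) (hpure : ∀ i, (V i).card = c)
    (hmin : ∀ i j : Fin q, i ≠ j → ¬ V i ⊆ V j)
    (hshell : ∀ j s : Fin q, s < j →
      ∃ l : Fin q, l < j ∧
        srFacet (V s) ∩ srFacet (V j) ⊆ srFacet (V l) ∩ srFacet (V j) ∧
        (srFacet (V l) ∩ srFacet (V j)).card + 1 = (srFacet (V j)).card)
    (j : Fin q) (hj : (j : ℕ) ≠ 0) :
    ∃ W : Finset (Σ i : Fin p, Fin (m i + 1)),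
      (∀ x ∈ W, x ∉ V j ∧ ∃ l : Fin q, l < j ∧ x ∈ V l) ∧
      ((⨅ l : Fin q, ⨅ _ : l < j, monomialPrime K (V l)) ⊔ monomialPrime K (V j)) =
        ⨅ x ∈ W, (monomialPrime K (V j) ⊔ Ideal.span {MvPolynomial.X x}) :=
  shelling_intersection_structure_general K V hshell j
end
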